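/- arXiv:1610.06338 — 5 statements merged into one kernel-verified Lean document; each statement's English description precedes it below -/
import Mathlib

section
/- Assume conditions (I1)-(I5). Then for each u⁺ ∈ X⁺ there exists a unique ũ ∈ X̃ such that m(u⁺) := u⁺ + ũ belongs to M; moreover m(u⁺) is the unique global minimizer of I on the affine subspace u⁺ + X̃. -/
open Filter Topology Set

noncomputable section

variable {X : Type*} [NormedAddCommGroup X] [NormedSpace ℝ X] [CompleteSpace X]

/-- 𝒯-convergence of a sequence: norm convergence of the `X⁺`-components together with
weak convergence of the `X̃`-components (`P` is the projection onto `X⁺` along `X̃`). -/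
def TConv (P : X →L[ℝ] X) (u : ℕ → X) (l : X) : Prop :=
  Tendsto (fun n => P (u n)) atTop (𝓝 (P l)) ∧
    ∀ φ : StrongDual ℝ X, Tendsto (fun n => φ (u n - P (u n))) atTop (𝓝 (φ (l - P l)))

/-- The functional `J(u) = ½‖u⁺‖² − I(u)`. -/
def Jf (P : X →L[ℝ] X) (I : X → ℝ) : X → ℝ := fun u => (1 / 2 : ℝ) * ‖P u‖ ^ 2 - I u

/-- `M = {u ∈ X : I'(u)[v] = 0 for all v ∈ X̃}`. -/
def Mset (P : X →L[ℝ] X) (I : X → ℝ) : Set X := {u | ∀ v : X, P v = 0 → fderiv ℝ I u v = 0}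

/-- The Nehari–Pankov set `N = {u ∈ X \ X̃ : J'(u)|_{ℝu ⊕ X̃} = 0}`. -/
def Nset (P : X →L[ℝ] X) (I : X → ℝ) : Set X :=
  {u | P u ≠ 0 ∧ fderiv ℝ (Jf P I) u u = 0 ∧ ∀ v : X, P v = 0 → fderiv ℝ (Jf P I) u v = 0}

/-- Structural hypotheses: `X` is a reflexive Banach space, `P : X → X` is a continuous
linear idempotent (the projection onto `X⁺ = {u : P u = u}` along `X̃ = ker P`),
`‖u‖² = ‖u⁺‖² + ‖ũ‖²`, and the norm on `X⁺` is induced by a Hilbert inner product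
(parallelogram law). -/
structure SpaceHyp (P : X →L[ℝ] X) : Prop where
  idem : ∀ u : X, P (P u) = P u
  pyth : ∀ u : X, ‖u‖ ^ 2 = ‖P u‖ ^ 2 + ‖u - P u‖ ^ 2
  parallelogram : ∀ u v : X, P u = u → P v = v →
    ‖u + v‖ ^ 2 + ‖u - v‖ ^ 2 = 2 * ‖u‖ ^ 2 + 2 * ‖v‖ ^ 2
  reflexive : Function.Surjective (NormedSpace.inclusionInDoubleDual ℝ X)

/-- (I1) `I ∈ C¹(X, ℝ)` and `I(u) ≥ I(0) = 0`. -/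
def CondI1 (I : X → ℝ) : Prop := ContDiff ℝ 1 I ∧ I 0 = 0 ∧ ∀ u : X, 0 ≤ I u

/-- (I2) `I` is 𝒯-sequentially lower semicontinuous. -/
def CondI2 (P : X →L[ℝ] X) (I : X → ℝ) : Prop :=
  ∀ (u : ℕ → X) (l : X), TConv P u l → I l ≤ Filter.liminf (fun n => I (u n)) atTop

/-- (I3) If `u_n →_𝒯 u` and `I(u_n) → I(u)` then `u_n → u` in norm. -/
def CondI3 (P : X →L[ℝ] X) (I : X → ℝ) : Prop :=
  ∀ (u : ℕ → X) (l : X), TConv P u l → Tendsto (fun n => I (u n)) atTop (𝓝 (I l)) →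
    Tendsto u atTop (𝓝 l)

/-- (I4) `‖u⁺‖ + I(u) → ∞` as `‖u‖ → ∞`. -/
def CondI4 (P : X →L[ℝ] X) (I : X → ℝ) : Prop :=
  ∀ u : ℕ → X, Tendsto (fun n => ‖u n‖) atTop atTop →
    Tendsto (fun n => ‖P (u n)‖ + I (u n)) atTop atTop

/-- (I5) If `u ∈ M` then `I(u) < I(u + v)` for every `v ∈ X̃ \ {0}`. -/
def CondI5 (P : X →L[ℝ] X) (I : X → ℝ) : Prop :=
  ∀ u ∈ Mset P I, ∀ v : X, P v = 0 → v ≠ 0 → I u < I (u + v)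

/-- (I6) `a := inf {J(u) : u ∈ X⁺, ‖u‖ = r} > 0` for some `r > 0`. -/
def CondI6 (P : X →L[ℝ] X) (I : X → ℝ) (r a : ℝ) : Prop :=
  0 < r ∧ a = sInf (Jf P I '' {u : X | P u = u ∧ ‖u‖ = r}) ∧ 0 < a

/-- (I7) There exists `u⁺ ∈ X⁺` with `sup_{v ∈ X̃} J(u⁺ + v) < a`. -/
def CondI7 (P : X →L[ℝ] X) (I : X → ℝ) (a : ℝ) : Prop :=
  ∃ up : X, P up = up ∧ ∃ b : ℝ, b < a ∧ ∀ v : X, P v = 0 → Jf P I (up + v) ≤ b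

/-- (I8) `I(t_n u_n)/t_n² → ∞` whenever `t_n → ∞` and `u_n⁺ → u⁺ ≠ 0`. -/
def CondI8 (P : X →L[ℝ] X) (I : X → ℝ) : Prop :=
  ∀ (t : ℕ → ℝ) (u : ℕ → X) (w : X), Tendsto t atTop atTop →
    Tendsto (fun n => P (u n)) atTop (𝓝 w) → w ≠ 0 →
      Tendsto (fun n => I (t n • u n) / t n ^ 2) atTop atTop

/-- (I9) The Nehari–Pankov inequality for `I`. -/
def CondI9 (P : X →L[ℝ] X) (I : X → ℝ) : Prop :=
  ∀ u ∈ Nset P I, ∀ t : ℝ, 0 ≤ t → ∀ v : X, P v = 0 → u ≠ t • u + v →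
    (t ^ 2 - 1) / 2 * fderiv ℝ I u u + t * fderiv ℝ I u v + I u - I (t • u + v) < 0

/-- A `(PS)_c`-sequence for `J`. -/
def PSSeq (P : X →L[ℝ] X) (I : X → ℝ) (c : ℝ) (u : ℕ → X) : Prop :=
  Tendsto (fun n => Jf P I (u n)) atTop (𝓝 c) ∧
    Tendsto (fun n => ‖fderiv ℝ (Jf P I) (u n)‖) atTop (𝓝 0)

/-- `J` satisfies the `(PS)ᵀ_c`-condition in `S`: every `(PS)_c`-sequence contained in `S`
has a 𝒯-convergent subsequence. -/
def PSTCond (P : X →L[ℝ] X) (I : X → ℝ) (S : Set X) (c : ℝ) : Prop :=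
  ∀ u : ℕ → X, (∀ n, u n ∈ S) → PSSeq P I c u →
    ∃ (φ : ℕ → ℕ) (l : X), StrictMono φ ∧ TConv P (u ∘ φ) l

/-- The class of mountain pass paths in `M`. -/
def GammaSet (P : X →L[ℝ] X) (I : X → ℝ) (r a : ℝ) : Set C(unitInterval, X) :=
  {γ | (∀ t, γ t ∈ Mset P I) ∧ γ 0 = 0 ∧ r < ‖P (γ 1)‖ ∧ Jf P I (γ 1) < a}

/-- The mountain pass level `c_M = inf_{γ ∈ Γ} max_{t ∈ [0,1]} J(γ(t))`. -/
def cMP (P : X →L[ℝ] X) (I : X → ℝ) (r a : ℝ) : ℝ :=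
  sInf ((fun γ : C(unitInterval, X) => sSup (range fun t => Jf P I (γ t))) '' GammaSet P I r a)

/-- The Nehari–Pankov level `c_N = inf_N J`. -/
def cNP (P : X →L[ℝ] X) (I : X → ℝ) : ℝ := sInf (Jf P I '' Nset P I)


section AuxWeakCompact
open NormedSpace

theorem aux_sep {E : Type*} [NormedAddCommGroup E] [NormedSpace ℝ E] (Z : Submodule ℝ E)
    (hZ : IsClosed (Z : Set E)) {x : E} (hx : x ∉ Z) :
    ∃ f : E →L[ℝ] ℝ, (∀ z ∈ Z, f z = 0) ∧ f x ≠ 0 := by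
  obtain ⟨f, u, hfu, hux⟩ := geometric_hahn_banach_closed_point Z.convex hZ hx
  have h0 : (0:ℝ) < u := by simpa using hfu 0 Z.zero_mem
  refine ⟨f, fun z hz => ?_, (h0.trans hux).ne'⟩
  by_contra hfz
  have ha := hfu (((u+1) / f z) • z) (Z.smul_mem _ hz)
  rw [map_smul, smul_eq_mul, div_mul_cancel₀ _ hfz] at ha
  linarith

theorem aux_refl_sub {E : Type*} [NormedAddCommGroup E] [NormedSpace ℝ E]
    (hrefl : Function.Surjective (inclusionInDoubleDual ℝ E))
    (Y : Submodule ℝ E) (hY : IsClosed (Y : Set E)) :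
    Function.Surjective (inclusionInDoubleDual ℝ Y) := by
  intro ψ
  set Rmap : StrongDual ℝ E →L[ℝ] StrongDual ℝ Y := (ContinuousLinearMap.compL ℝ Y E ℝ).flip Y.subtypeL with hR
  have hRapp : ∀ (f : StrongDual ℝ E) (z : Y), Rmap f z = f z := fun f z => rfl
  obtain ⟨x, hx⟩ := hrefl (ψ.comp Rmap)
  have hxY : x ∈ Y := by
    by_contra hxY
    obtain ⟨f, hf0, hfx⟩ := aux_sep Y hY hxY
    have h1 : Rmap f = 0 := by
      ext z; exact hf0 z z.2
    have h2 : (inclusionInDoubleDual ℝ E x) f = ψ (Rmap f) := by rw [hx]; rfl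
    rw [h1, map_zero, dual_def] at h2
    exact hfx h2
  refine ⟨⟨x, hxY⟩, ?_⟩
  ext g
  obtain ⟨φf, hext, -⟩ := exists_extension_norm_eq Y g
  have h3 : Rmap φf = g := by ext z; exact hext z
  have h4 : (inclusionInDoubleDual ℝ E x) φf = ψ (Rmap φf) := by rw [hx]; rfl
  rw [h3, dual_def] at h4
  rw [dual_def, ← hext ⟨x, hxY⟩, ← h4]

theorem aux_bidual_sep {E : Type*} [NormedAddCommGroup E] [NormedSpace ℝ E]
    (hrefl : Function.Surjective (inclusionInDoubleDual ℝ E))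
    [TopologicalSpace.SeparableSpace E] :
    TopologicalSpace.SeparableSpace (StrongDual ℝ (StrongDual ℝ E)) := by
  haveI : Nonempty E := ⟨0⟩
  obtain ⟨y, hy⟩ := TopologicalSpace.exists_dense_seq E
  apply (DenseRange.separableSpace' (u := fun k => inclusionInDoubleDual ℝ E (y k)))
  refine (Metric.denseRange_iff (α := StrongDual ℝ (StrongDual ℝ E))).mpr ?_
  intro Ψ ε hε
  obtain ⟨x, rfl⟩ := hrefl Ψ
  obtain ⟨k, hk⟩ := Metric.denseRange_iff.mp hy x ε hε
  refine ⟨k, ?_⟩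
  have hnorm : ‖inclusionInDoubleDual ℝ E (x - y k)‖ = ‖x - y k‖ :=
    (inclusionInDoubleDualLi ℝ (E := E)).norm_map _
  exact (dist_eq_norm (inclusionInDoubleDual ℝ E x) (inclusionInDoubleDual ℝ E (y k))).trans_lt (by rw [← map_sub, hnorm, ← dist_eq_norm]; exact hk)

theorem aux_sep_of_dual_sep {E : Type*} [NormedAddCommGroup E] [NormedSpace ℝ E]
    [TopologicalSpace.SeparableSpace (StrongDual ℝ E)] :
    TopologicalSpace.SeparableSpace E := by
  haveI : Nonempty (StrongDual ℝ E) := ⟨0⟩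
  obtain ⟨ψ, hψ⟩ := TopologicalSpace.exists_dense_seq (StrongDual ℝ E)
  have hchoice : ∀ k : ℕ, ∃ g : E, ‖g‖ ≤ 1 ∧ (ψ k ≠ 0 → ‖ψ k‖ / 2 < ψ k g) := by
    intro k
    by_cases h : ψ k = 0
    · exact ⟨0, by simp, fun h' => absurd h h'⟩
    · have hlt : ‖ψ k‖ / 2 < ‖ψ k‖ := by
        have : 0 < ‖ψ k‖ := norm_pos_iff.mpr h
        linarith
      obtain ⟨x, hx1, hx2⟩ := ContinuousLinearMap.exists_lt_apply_of_lt_opNorm (ψ k) hlt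
      rcases le_or_gt (ψ k x) 0 with h' | h'
      · refine ⟨-x, by simpa using hx1.le, fun _ => ?_⟩
        rw [map_neg]
        rw [Real.norm_eq_abs, abs_of_nonpos h'] at hx2
        linarith
      · refine ⟨x, hx1.le, fun _ => ?_⟩
        rwa [Real.norm_eq_abs, abs_of_pos h'] at hx2
  choose g hg1 hg2 using hchoice
  set Z := (Submodule.span ℝ (Set.range g)).topologicalClosure with hZdef
  have hZtop : ∀ x : E, x ∈ Z := by
    by_contra hne
    push_neg at hne
    obtain ⟨x0, hx0⟩ := hne
    obtain ⟨f, hf0, hfx⟩ := aux_sep Z (Submodule.isClosed_topologicalClosure _) hx0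
    set f' : StrongDual ℝ E := ‖f‖⁻¹ • f with hf'
    have hfn : (0:ℝ) < ‖f‖ := norm_pos_iff.mpr (fun h => hfx (by rw [h]; rfl))
    have hf'n : ‖f'‖ = 1 := by
      rw [hf', norm_smul, norm_inv, norm_norm, inv_mul_cancel₀ hfn.ne']
    obtain ⟨k, hk⟩ := Metric.denseRange_iff.mp hψ f' (1/3) (by norm_num)
    rw [dist_eq_norm] at hk
    have hψk : (2:ℝ)/3 < ‖ψ k‖ := by
      have := norm_sub_norm_le f' (ψ k)
      rw [hf'n] at this
      linarith [this.trans hk.le]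
    have hψkne : ψ k ≠ 0 := by
      intro h; rw [h, norm_zero] at hψk; linarith
    have hbig : (1:ℝ)/3 < ψ k (g k) := by
      have := hg2 k hψkne
      linarith
    have hZg : f' (g k) = 0 := by
      have : g k ∈ Z := Submodule.le_topologicalClosure _
        (Submodule.subset_span (mem_range_self k))
      simp [hf', hf0 _ this]
    have hsmall : ψ k (g k) ≤ 1/3 := by
      have h1 : ψ k (g k) - f' (g k) ≤ ‖ψ k - f'‖ * ‖g k‖ := by
        calc ψ k (g k) - f' (g k) = (ψ k - f') (g k) := by simp
        _ ≤ ‖(ψ k - f') (g k)‖ := le_abs_self _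
        _ ≤ ‖ψ k - f'‖ * ‖g k‖ := ContinuousLinearMap.le_opNorm _ _
      have h2 : ‖ψ k - f'‖ * ‖g k‖ ≤ ‖ψ k - f'‖ * 1 :=
        mul_le_mul_of_nonneg_left (hg1 k) (norm_nonneg _)
      have h3 : ‖ψ k - f'‖ = ‖f' - ψ k‖ := norm_sub_rev _ _
      rw [hZg, h3] at h1
      nlinarith [norm_nonneg (g k), norm_nonneg (f' - ψ k), hg1 k, hk, h1]
    linarith
  have hsep : TopologicalSpace.IsSeparable (univ : Set E) := by
    apply TopologicalSpace.IsSeparable.mono _ (fun x _ => hZtop x)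
    exact ((Set.countable_range g).isSeparable.span).closure
  exact TopologicalSpace.isSeparable_univ_iff.mp hsep

/-- Weak sequential compactness of bounded sequences in a reflexive space. -/
theorem aux_weak_subseq {E : Type*} [NormedAddCommGroup E] [NormedSpace ℝ E]
    (hrefl : Function.Surjective (inclusionInDoubleDual ℝ E))
    (v : ℕ → E) (R : ℝ) (hv : ∀ n, ‖v n‖ ≤ R) :
    ∃ (φ : ℕ → ℕ) (w : E), StrictMono φ ∧
      ∀ f : E →L[ℝ] ℝ, Tendsto (fun n => f (v (φ n))) atTop (𝓝 (f w)) := by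
  have hR0 : 0 ≤ R := (norm_nonneg (v 0)).trans (hv 0)
  set Y : Submodule ℝ E := (Submodule.span ℝ (Set.range v)).topologicalClosure with hYdef
  have hYclosed : IsClosed (Y : Set E) := Submodule.isClosed_topologicalClosure _
  have hvY : ∀ n, v n ∈ Y := fun n =>
    Submodule.le_topologicalClosure _ (Submodule.subset_span (mem_range_self n))
  haveI hYsep : TopologicalSpace.SeparableSpace Y := by
    apply TopologicalSpace.IsSeparable.separableSpace
    exact ((Set.countable_range v).isSeparable.span).closure
  have hYrefl : Function.Surjective (inclusionInDoubleDual ℝ Y) := aux_refl_sub hrefl Y hYclosed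
  haveI : TopologicalSpace.SeparableSpace (StrongDual ℝ (StrongDual ℝ Y)) := aux_bidual_sep hYrefl
  haveI : TopologicalSpace.SeparableSpace (StrongDual ℝ Y) := @aux_sep_of_dual_sep (StrongDual ℝ Y) _ _ ‹_›
  haveI : Nonempty (StrongDual ℝ Y) := ⟨0⟩
  obtain ⟨G, hG⟩ := TopologicalSpace.exists_dense_seq (StrongDual ℝ Y)
  set vY : ℕ → Y := fun n => ⟨v n, hvY n⟩ with hvYdef
  have hvYnorm : ∀ n, ‖vY n‖ ≤ R := fun n => hv n
  -- diagonal extraction through a compact product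
  set s : Set (ℕ → ℝ) := Set.pi univ (fun k => Icc (-(‖G k‖ * R)) (‖G k‖ * R)) with hsdef
  have hscomp : IsCompact s := isCompact_univ_pi fun k => isCompact_Icc
  have hmem : ∀ n, (fun k => G k (vY n)) ∈ s := by
    intro n
    rw [Set.mem_univ_pi]
    intro k
    have h1 : |G k (vY n)| ≤ ‖G k‖ * R := by
      calc |G k (vY n)| = ‖G k (vY n)‖ := (Real.norm_eq_abs _).symm
      _ ≤ ‖G k‖ * ‖vY n‖ := ContinuousLinearMap.le_opNorm _ _
      _ ≤ ‖G k‖ * R := mul_le_mul_of_nonneg_left (hvYnorm n) (norm_nonneg (G k))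
    exact abs_le.mp h1
  obtain ⟨l, -, φ, hφ, hconv⟩ := hscomp.tendsto_subseq hmem
  have hcoord : ∀ k, Tendsto (fun n => G k (vY (φ n))) atTop (𝓝 (l k)) := by
    intro k
    exact (tendsto_pi_nhds.mp hconv) k
  -- every functional converges along the subsequence
  have hallconv : ∀ h : StrongDual ℝ Y, ∃ c, Tendsto (fun n => h (vY (φ n))) atTop (𝓝 c) := by
    intro h
    have hcauchy : CauchySeq (fun n => h (vY (φ n))) := by
      rw [Metric.cauchySeq_iff]
      intro ε hε
      have hε4 : 0 < ε / (4 * (R + 1)) := by positivity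
      obtain ⟨k, hk⟩ := Metric.denseRange_iff.mp hG h _ hε4
      replace hk := (dist_eq_norm h (G k)).symm.trans_lt hk
      obtain ⟨N, hN⟩ := (Metric.cauchySeq_iff.mp (hcoord k).cauchySeq) (ε/2) (by positivity)
      refine ⟨N, fun m hm n hn => ?_⟩
      have key : ∀ j, |h (vY (φ j)) - G k (vY (φ j))| ≤ ε / 4 := by
        intro j
        calc |h (vY (φ j)) - G k (vY (φ j))| = ‖(h - G k) (vY (φ j))‖ := by
              rw [Real.norm_eq_abs]; simp
        _ ≤ ‖h - G k‖ * ‖vY (φ j)‖ := ContinuousLinearMap.le_opNorm _ _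
        _ ≤ (ε / (4 * (R + 1))) * (R + 1) := by
            apply mul_le_mul hk.le ((hvYnorm _).trans (by linarith)) (norm_nonneg _) hε4.le
        _ = ε / 4 := by field_simp
      have h2 := hN m hm n hn
      rw [Real.dist_eq] at h2 ⊢
      have k1 := key m
      have k2 := key n
      have : h (vY (φ m)) - h (vY (φ n)) =
          (h (vY (φ m)) - G k (vY (φ m))) + (G k (vY (φ m)) - G k (vY (φ n)))
          + (G k (vY (φ n)) - h (vY (φ n))) := by ring
      rw [this]
      calc _ ≤ |h (vY (φ m)) - G k (vY (φ m))| + |G k (vY (φ m)) - G k (vY (φ n))|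
            + |G k (vY (φ n)) - h (vY (φ n))| := by
              exact (abs_add_le _ _).trans (by gcongr; exact abs_add_le _ _)
      _ < ε := by
          rw [abs_sub_comm (G k (vY (φ n)))] at *
          linarith
    exact cauchySeq_tendsto_of_complete hcauchy
  choose Lf hLf using hallconv
  -- L is linear and bounded
  have hLadd : ∀ h1 h2 : StrongDual ℝ Y, Lf (h1 + h2) = Lf h1 + Lf h2 := by
    intro h1 h2
    refine tendsto_nhds_unique (hLf (h1 + h2)) ?_
    have := (hLf h1).add (hLf h2)
    simpa using this
  have hLsmul : ∀ (c : ℝ) (h : StrongDual ℝ Y), Lf (c • h) = c • Lf h := by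
    intro c h
    refine tendsto_nhds_unique (hLf (c • h)) ?_
    have := (hLf h).const_mul c
    simpa [smul_eq_mul] using this
  set Llin : StrongDual ℝ Y →ₗ[ℝ] ℝ :=
    { toFun := Lf, map_add' := hLadd, map_smul' := hLsmul } with hLlin
  have hLbound : ∀ h : StrongDual ℝ Y, ‖Llin h‖ ≤ R * ‖h‖ := by
    intro h
    have hb : ∀ n, |h (vY (φ n))| ≤ R * ‖h‖ := by
      intro n
      calc |h (vY (φ n))| = ‖h (vY (φ n))‖ := (Real.norm_eq_abs _).symm
      _ ≤ ‖h‖ * ‖vY (φ n)‖ := ContinuousLinearMap.le_opNorm _ _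
      _ ≤ ‖h‖ * R := mul_le_mul_of_nonneg_left (hvYnorm _) (norm_nonneg h)
      _ = R * ‖h‖ := mul_comm _ _
    have habs : Tendsto (fun n => |h (vY (φ n))|) atTop (𝓝 |Lf h|) := (hLf h).abs
    exact le_of_tendsto habs (Eventually.of_forall hb)
  set L : StrongDual ℝ Y →L[ℝ] ℝ := LinearMap.mkContinuous (E := StrongDual ℝ Y) Llin R hLbound with hL
  obtain ⟨w', hw'⟩ := hYrefl L
  refine ⟨φ, (w' : E), hφ, ?_⟩
  intro f
  have hfY : ∀ n, f (v (φ n)) = (f.comp Y.subtypeL) (vY (φ n)) := fun n => rfl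
  have h1 : Tendsto (fun n => (f.comp Y.subtypeL) (vY (φ n))) atTop (𝓝 (Lf (f.comp Y.subtypeL))) :=
    hLf _
  have h2 : Lf (f.comp Y.subtypeL) = (f.comp Y.subtypeL) w' :=
    (congrFun (congrArg (fun (T : StrongDual ℝ (StrongDual ℝ Y)) => (T : StrongDual ℝ Y → ℝ)) hw')
      (f.comp Y.subtypeL)).symm
  have h3 : (f.comp Y.subtypeL) w' = f (w' : E) := rfl
  rw [← h3, ← h2]
  simpa only [hfY] using h1


end AuxWeakCompact

open NormedSpace in
/-- (cf. [Bartsch–Mederski], Proposition 4.1 a)).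
Under (I1)–(I5), for each `u⁺ ∈ X⁺` there is a unique `ũ ∈ X̃` with `u⁺ + ũ ∈ M`;
this point `m(u⁺) = u⁺ + ũ` is the unique global minimizer of `I` on `u⁺ + X̃`. -/

theorem statement0 (P : X →L[ℝ] X) (I : X → ℝ) (hX : SpaceHyp P)
    (h1 : CondI1 I) (h2 : CondI2 P I) (h3 : CondI3 P I) (h4 : CondI4 P I) (h5 : CondI5 P I) :
    ∀ up : X, P up = up →
      (∃! ut : X, P ut = 0 ∧ up + ut ∈ Mset P I) ∧
      ∀ ut : X, P ut = 0 → up + ut ∈ Mset P I →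
        ∀ v : X, P v = 0 → v ≠ ut → I (up + ut) < I (up + v) := by
  intro up hup
  -- the strict minimality statement, purely from (I5)
  have hstrict : ∀ ut : X, P ut = 0 → up + ut ∈ Mset P I →
      ∀ v : X, P v = 0 → v ≠ ut → I (up + ut) < I (up + v) := by
    intro ut hPut hM v hPv hne
    have h := h5 (up + ut) hM (v - ut) (by rw [map_sub, hPv, hPut, sub_zero])
      (sub_ne_zero_of_ne hne)
    have : up + ut + (v - ut) = up + v := by abel
    rwa [this] at h
  refine ⟨?_, hstrict⟩
  -- existence of a minimizer
  have hI0 : ∀ u : X, 0 ≤ I u := h1.2.2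
  set S : Set ℝ := (fun v => I (up + v)) '' {v : X | P v = 0} with hS
  have hSne : S.Nonempty := ⟨I (up + 0), 0, by simp, rfl⟩
  have hSbdd : BddBelow S := ⟨0, by rintro x ⟨v, -, rfl⟩; exact hI0 _⟩
  set c : ℝ := sInf S with hc
  have hcle : ∀ v : X, P v = 0 → c ≤ I (up + v) := fun v hv => csInf_le hSbdd ⟨v, hv, rfl⟩
  -- minimizing sequence
  have hms : ∀ n : ℕ, ∃ v : X, P v = 0 ∧ I (up + v) < c + 1 / (n + 1) := by
    intro n
    have hlt : c < c + 1 / (n + 1) := by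
      have : (0:ℝ) < 1 / (n + 1) := by positivity
      linarith
    obtain ⟨x, ⟨v, hv, rfl⟩, hxlt⟩ := exists_lt_of_csInf_lt hSne hlt
    exact ⟨v, hv, hxlt⟩
  choose v hPv hvlt using hms
  set u : ℕ → X := fun n => up + v n with hu
  have hPu : ∀ n, P (u n) = up := by
    intro n; rw [hu]; simp [map_add, hup, hPv n]
  have hIu_tendsto : Tendsto (fun n => I (u n)) atTop (𝓝 c) := by
    have hub : Tendsto (fun n : ℕ => c + 1 / ((n:ℝ) + 1)) atTop (𝓝 (c + 0)) :=
      tendsto_const_nhds.add tendsto_one_div_add_atTop_nhds_zero_nat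
    rw [add_zero] at hub
    exact tendsto_of_tendsto_of_tendsto_of_le_of_le tendsto_const_nhds hub
      (fun n => hcle (v n) (hPv n)) (fun n => (hvlt n).le)
  -- boundedness of the minimizing sequence
  have hbdd : ∃ R : ℝ, ∀ n, ‖u n‖ ≤ R := by
    by_contra hbd
    push_neg at hbd
    have hσ : ∀ k : ℕ, ∃ n, (k:ℝ) < ‖u n‖ := fun k => hbd k
    choose σ hσ using hσ
    have htend : Tendsto (fun k => ‖u (σ k)‖) atTop atTop :=
      tendsto_atTop_mono (fun k => (hσ k).le) tendsto_natCast_atTop_atTop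
    have h4' := h4 (u ∘ σ) htend
    have hbound : ∀ k, ‖P ((u ∘ σ) k)‖ + I ((u ∘ σ) k) ≤ ‖up‖ + (c + 1) := by
      intro k
      have h1' : I (u (σ k)) ≤ c + 1 := by
        have := hvlt (σ k)
        have h2' : 1 / ((σ k : ℝ) + 1) ≤ 1 := by
          rw [div_le_one (by positivity)]
          have : (0:ℝ) ≤ (σ k : ℝ) := Nat.cast_nonneg _
          linarith
        exact le_trans this.le (by linarith)
      simp only [Function.comp_apply, hPu (σ k)]
      linarith
    obtain ⟨k, hk⟩ := (h4'.eventually_gt_atTop (‖up‖ + (c + 1))).exists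
    exact absurd (hbound k) (not_le.mpr hk)
  obtain ⟨R, hR⟩ := hbdd
  -- extract weakly convergent subsequence
  obtain ⟨φ, w, hφ, hweak⟩ := aux_weak_subseq hX.reflexive u R hR
  -- identify P w = up
  have hPw : P w = up := by
    by_contra hne
    have hsub : ∀ f : StrongDual ℝ X, f (P w - up) = 0 := by
      intro f
      have h1' : Tendsto (fun n => (f.comp P) (u (φ n))) atTop (𝓝 ((f.comp P) w)) :=
        hweak (f.comp P)
      have h2' : (fun n => (f.comp P) (u (φ n))) = fun _ => f up := by
        funext n
        simp only [ContinuousLinearMap.comp_apply, hPu (φ n)]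
      rw [h2'] at h1'
      have h3' : f up = (f.comp P) w := tendsto_nhds_unique tendsto_const_nhds h1'
      simp only [ContinuousLinearMap.comp_apply] at h3'
      rw [map_sub, ← h3', sub_self]
    have hne' : P w - up ≠ 0 := sub_ne_zero_of_ne hne
    obtain ⟨g, -, hg⟩ := exists_dual_vector ℝ (P w - up) (norm_ne_zero_iff.mpr hne')
    rw [hsub g] at hg
    have : ‖P w - up‖ = 0 := by exact_mod_cast hg.symm
    exact hne' (norm_eq_zero.mp this)
  -- T-convergence
  have hTconv : TConv P (u ∘ φ) w := by
    constructor
    · have : (fun n => P ((u ∘ φ) n)) = fun _ => P w := by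
        funext n; simp only [Function.comp_apply, hPu (φ n), hPw]
      rw [this]; exact tendsto_const_nhds
    · intro f
      have h1' : Tendsto (fun n => f ((u ∘ φ) n)) atTop (𝓝 (f w)) := hweak f
      have h2' : ∀ n, f ((u ∘ φ) n - P ((u ∘ φ) n)) = f ((u ∘ φ) n) - f up := by
        intro n; rw [map_sub]; simp only [Function.comp_apply, hPu (φ n)]
      simp only [h2', map_sub, hPw]
      exact h1'.sub tendsto_const_nhds
  -- w is a minimizer
  have hliminf : Filter.liminf (fun n => I ((u ∘ φ) n)) atTop = c :=
    (hIu_tendsto.comp hφ.tendsto_atTop).liminf_eq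
  have hIwle : I w ≤ c := le_of_le_of_eq (h2 (u ∘ φ) w hTconv) hliminf
  have hPwup : P (w - up) = 0 := by rw [map_sub, hPw, hup, sub_self]
  have hwdecomp : up + (w - up) = w := by abel
  have hIw : I w = c := le_antisymm hIwle (by
    have := hcle (w - up) hPwup
    rwa [hwdecomp] at this)
  have hmin : ∀ z : X, P z = 0 → I w ≤ I (up + z) := fun z hz => hIw ▸ hcle z hz
  -- w belongs to M
  have hwM : w ∈ Mset P I := by
    intro z hz
    set g : ℝ → ℝ := fun t => I (w + t • z) with hg
    have hglob : ∀ t : ℝ, g 0 ≤ g t := by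
      intro t
      have hmem : P ((w - up) + t • z) = 0 := by
        rw [map_add, hPwup, map_smul, hz, smul_zero, add_zero]
      have h1' := hmin ((w - up) + t • z) hmem
      have he1 : up + ((w - up) + t • z) = w + t • z := by abel
      have he0 : w + (0:ℝ) • z = w := by rw [zero_smul, add_zero]
      rw [he1] at h1'
      rw [hg]; simp only []
      rw [he0]
      exact h1'
    have hlocmin : IsLocalMin g 0 := Filter.Eventually.of_forall hglob
    have hdiff : HasFDerivAt I (fderiv ℝ I w) w :=
      ((h1.1.differentiable one_ne_zero) w).hasFDerivAt
    have hcurve : HasDerivAt (fun t : ℝ => w + t • z) z 0 := by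
      have h0 : HasDerivAt (fun t : ℝ => t • z) ((1:ℝ) • z) 0 :=
        (hasDerivAt_id (0:ℝ)).smul_const z
      rw [one_smul] at h0
      exact h0.const_add w
    have hcomp : HasDerivAt g (fderiv ℝ I w z) 0 := by
      have h0 : w + (0:ℝ) • z = w := by rw [zero_smul, add_zero]
      have hdiff' : HasFDerivAt I (fderiv ℝ I w) (w + (0:ℝ) • z) := by rwa [h0]
      exact hdiff'.comp_hasDerivAt 0 hcurve
    exact hlocmin.hasDerivAt_eq_zero hcomp
  -- package existence and uniqueness
  refine ⟨w - up, ⟨hPwup, by rwa [hwdecomp]⟩, ?_⟩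
  intro y ⟨hPy, hyM⟩
  by_contra hne
  have hwM' : up + (w - up) ∈ Mset P I := by rwa [hwdecomp]
  have hlt1 : I (up + y) < I (up + (w - up)) :=
    hstrict y hPy hyM (w - up) hPwup (fun h => hne h.symm)
  have hlt2 : I (up + (w - up)) < I (up + y) :=
    hstrict (w - up) hPwup hwM' y hPy (fun h => hne h)
  linarith


end
end

section
/- Assume conditions (I1)-(I5). The map m : X⁺ → M, assigning to each u⁺ ∈ X⁺ the unique point of M in the affine subspace u⁺ + X̃ (equivalently, the unique minimizer of I on u⁺ + X̃), is a homeomorphism from X⁺ with the norm topology onto M with the norm topology of X, with inverse M ∋ u ↦ u⁺. -/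
open Filter Topology Set

noncomputable section

variable {X : Type*} [NormedAddCommGroup X] [NormedSpace ℝ X] [CompleteSpace X]

/-!
By (I5) every point of `M` is the strict minimizer of `I` on its fiber `u⁺ + X̃`, so `m` is a
bijection onto `M` with inverse `P`. For continuity, let `u⁺ₙ → u⁺`. Translating `m u⁺` into
the fiber over `u⁺ₙ` gives competitors showing `limsup I (m u⁺ₙ) ≤ I (m u⁺)`; with (I4) the
`m u⁺ₙ` are bounded, so by reflexivity a subsequence 𝒯-converges to a point of the fiber over
`u⁺`. By (I2) and (I5) that point is `m u⁺` and `I (m u⁺ₙ) → I (m u⁺)` along the subsequence,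
and (I3) turns 𝒯-convergence into norm convergence.
-/

section WeakSequentialCompactness

open NormedSpace TopologicalSpace

variable {E : Type*} [NormedAddCommGroup E] [NormedSpace ℝ E]

theorem Submodule.exists_dual_eq_zero_and_ne_of_notMem {S : Submodule ℝ E}
    (hS : IsClosed (S : Set E)) {z : E} (hz : z ∉ S) :
    ∃ f : StrongDual ℝ E, (∀ s ∈ S, f s = 0) ∧ f z ≠ 0 := by
  obtain ⟨f, c, hfz, hfS⟩ := geometric_hahn_banach_point_closed S.convex hS hz
  have hc : c < 0 := by simpa using hfS 0 S.zero_mem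
  refine ⟨f, fun s hs => ?_, (hfz.trans hc).ne⟩
  by_contra hfs
  -- a linear functional bounded below on a subspace vanishes on it
  have := hfS (((c - 1) / f s) • s) (S.smul_mem _ hs)
  rw [map_smul, smul_eq_mul, div_mul_cancel₀ _ hfs] at this
  linarith

theorem Submodule.surjective_inclusionInDoubleDual
    (hrefl : Function.Surjective (inclusionInDoubleDual ℝ E))
    {S : Submodule ℝ E} (hS : IsClosed (S : Set E)) :
    Function.Surjective (inclusionInDoubleDual ℝ S) := by
  intro Φ
  obtain ⟨x, hx⟩ := hrefl (Φ.comp (ContinuousLinearMap.precomp ℝ S.subtypeL))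
  have hΦ : ∀ f : StrongDual ℝ E, f x = Φ (f.comp S.subtypeL) := fun f => by
    rw [← dual_def ℝ E x f, hx]; rfl
  have hxS : x ∈ S := by
    by_contra hxS
    obtain ⟨f, hfS, hfx⟩ := S.exists_dual_eq_zero_and_ne_of_notMem hS hxS
    have : f.comp S.subtypeL = 0 := ContinuousLinearMap.ext fun s => hfS s s.2
    exact hfx (by rw [hΦ, this, map_zero])
  refine ⟨⟨x, hxS⟩, ContinuousLinearMap.ext fun g => ?_⟩
  obtain ⟨G, hG, -⟩ := exists_extension_norm_eq S g
  have : G.comp S.subtypeL = g := ContinuousLinearMap.ext hG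
  rw [dual_def, ← this, ← hΦ]
  rfl

theorem separableSpace_of_separableSpace_strongDual [SeparableSpace (StrongDual ℝ E)] :
    SeparableSpace E := by
  obtain ⟨f, hf⟩ := exists_dense_seq (StrongDual ℝ E)
  have : ∀ n, ∃ x : E, ‖x‖ ≤ 1 ∧ ‖f n‖ / 2 ≤ ‖f n x‖ := fun n => by
    rcases eq_or_ne (f n) 0 with h0 | h0
    · exact ⟨0, by simp, by simp [h0]⟩
    · obtain ⟨x, hx, hfx⟩ :=
        (f n).exists_lt_apply_of_lt_opNorm (half_lt_self (norm_pos_iff.2 h0))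
      exact ⟨x, hx.le, hfx.le⟩
  choose x hx hfx using this
  set S := (Submodule.span ℝ (range x)).topologicalClosure
  suffices hS : (S : Set E) = univ by
    rw [← isSeparable_univ_iff, ← hS, Submodule.topologicalClosure_coe]
    exact (countable_range x).isSeparable.span.closure
  by_contra hS
  obtain ⟨z, hz⟩ := (ne_univ_iff_exists_notMem _).1 hS
  obtain ⟨g, hgS, hgz⟩ := S.exists_dual_eq_zero_and_ne_of_notMem
    (Submodule.span ℝ (range x)).isClosed_topologicalClosure hz
  have hg : 0 < ‖g‖ := norm_pos_iff.2 fun h => hgz (by simp [h])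
  -- `g` vanishes at every `x n`, where `f n` is large: no `f n` approximates `g`
  obtain ⟨n, hn⟩ := Metric.denseRange_iff.1 hf g (‖g‖ / 4) (by positivity)
  have hgx : g (x n) = 0 :=
    hgS _ (Submodule.le_topologicalClosure _ (Submodule.subset_span (mem_range_self n)))
  rw [dist_eq_norm] at hn
  have : ‖f n (x n)‖ ≤ ‖g‖ / 4 := calc
    ‖f n (x n)‖ = ‖(g - f n) (x n)‖ := by simp [hgx]
    _ ≤ ‖g - f n‖ * ‖x n‖ := (g - f n).le_opNorm _
    _ ≤ ‖g‖ / 4 := by nlinarith [hx n, norm_nonneg (g - f n), norm_nonneg (x n)]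
  linarith [hfx n, norm_sub_norm_le g (f n)]

theorem exists_weakly_tendsto_subseq_of_separableSpace_strongDual
    [SeparableSpace (StrongDual ℝ E)]
    (hrefl : Function.Surjective (inclusionInDoubleDual ℝ E))
    {x : ℕ → E} {C : ℝ} (hC : ∀ n, ‖x n‖ ≤ C) :
    ∃ φ : ℕ → ℕ, StrictMono φ ∧ ∃ y : E,
      ∀ f : StrongDual ℝ E, Tendsto (fun n => f (x (φ n))) atTop (𝓝 (f y)) := by
  have hball : ∀ n, StrongDual.toWeakDual (inclusionInDoubleDual ℝ E (x n)) ∈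
      WeakDual.toStrongDual ⁻¹' Metric.closedBall 0 C := fun n => by
    rw [mem_preimage, Metric.mem_closedBall]
    exact (dist_zero_right (E := StrongDual ℝ (StrongDual ℝ E)) _).trans_le
      ((double_dual_bound ℝ E (x n)).trans (hC n))
  obtain ⟨Φ, -, φ, hφ, hΦ⟩ := WeakDual.isSeqCompact_closedBall ℝ (StrongDual ℝ E) 0 C hball
  obtain ⟨y, hy⟩ := hrefl (WeakDual.toStrongDual Φ)
  refine ⟨φ, hφ, y, fun f => ?_⟩
  rw [← dual_def ℝ E y f, hy]
  exact ((WeakDual.eval_continuous f).tendsto Φ).comp hΦ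

theorem exists_weakly_tendsto_subseq
    (hrefl : Function.Surjective (inclusionInDoubleDual ℝ E))
    {x : ℕ → E} {C : ℝ} (hC : ∀ n, ‖x n‖ ≤ C) :
    ∃ φ : ℕ → ℕ, StrictMono φ ∧ ∃ y : E,
      ∀ f : StrongDual ℝ E, Tendsto (fun n => f (x (φ n))) atTop (𝓝 (f y)) := by
  set S := (Submodule.span ℝ (range x)).topologicalClosure
  have hxS : ∀ n, x n ∈ S := fun n =>
    Submodule.le_topologicalClosure _ (Submodule.subset_span (mem_range_self n))
  have : SeparableSpace S := by
    refine IsSeparable.separableSpace ?_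
    rw [Submodule.topologicalClosure_coe]
    exact (countable_range x).isSeparable.span.closure
  have hreflS := S.surjective_inclusionInDoubleDual hrefl
    (Submodule.span ℝ (range x)).isClosed_topologicalClosure
  -- `S` is separable and reflexive, so its bidual, and hence its dual, are separable
  have : SeparableSpace (StrongDual ℝ (StrongDual ℝ S)) :=
    hreflS.denseRange.separableSpace (inclusionInDoubleDual ℝ S).continuous
  have : SeparableSpace (StrongDual ℝ S) :=
    separableSpace_of_separableSpace_strongDual (E := StrongDual ℝ S)
  obtain ⟨φ, hφ, y, hy⟩ := exists_weakly_tendsto_subseq_of_separableSpace_strongDual hreflS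
    (x := fun n => ⟨x n, hxS n⟩) hC
  exact ⟨φ, hφ, y, fun f => hy (f.comp S.subtypeL)⟩

end WeakSequentialCompactness

section Fibers

variable {E : Type*} [NormedAddCommGroup E] [NormedSpace ℝ E] {P : E →L[ℝ] E} {I : E → ℝ}

theorem le_of_mem_Mset (h5 : CondI5 P I) {u w : E} (hu : u ∈ Mset P I) (hw : P w = P u) :
    I u ≤ I w := by
  rcases eq_or_ne w u with rfl | hne
  · exact le_rfl
  · simpa using (h5 u hu (w - u) (by rw [map_sub, hw, sub_self]) (sub_ne_zero.2 hne)).le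

theorem eq_of_mem_Mset_of_le (h5 : CondI5 P I) {u w : E} (hu : u ∈ Mset P I)
    (hw : P w = P u) (hle : I w ≤ I u) : w = u := by
  by_contra hne
  have := h5 u hu (w - u) (by rw [map_sub, hw, sub_self]) (sub_ne_zero.2 hne)
  rw [add_sub_cancel] at this
  linarith

theorem eq_of_mem_Mset (h5 : CondI5 P I) {u w : E} (hu : u ∈ Mset P I) (hw : w ∈ Mset P I)
    (hP : P w = P u) : w = u :=
  eq_of_mem_Mset_of_le h5 hu hP (le_of_mem_Mset h5 hw hP.symm)

theorem exists_norm_le_of_condI4 (h4 : CondI4 P I) {w : ℕ → E} {B : ℝ}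
    (hB : ∀ n, ‖P (w n)‖ + I (w n) ≤ B) : ∃ C, ∀ n, ‖w n‖ ≤ C := by
  by_contra! hw
  choose n hn using hw
  have hunb : Tendsto (fun k : ℕ => ‖w (n k)‖) atTop atTop :=
    tendsto_atTop_mono (fun k => (hn k).le) tendsto_natCast_atTop_atTop
  obtain ⟨k, hk⟩ := ((h4 _ hunb).eventually_gt_atTop B).exists
  exact (hB (n k)).not_gt hk

theorem SpaceHyp.norm_sub_le (hX : SpaceHyp P) (u : E) : ‖u - P u‖ ≤ ‖u‖ := by
  nlinarith [hX.pyth u, norm_nonneg u, norm_nonneg (u - P u), sq_nonneg ‖P u‖]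

theorem SpaceHyp.exists_tconv_subseq (hX : SpaceHyp P) {w : ℕ → E} {p : E}
    (hw : Tendsto (fun n => P (w n)) atTop (𝓝 p)) {C : ℝ} (hC : ∀ n, ‖w n‖ ≤ C) :
    ∃ φ : ℕ → ℕ, ∃ l : E, StrictMono φ ∧ P l = p ∧ TConv P (w ∘ φ) l := by
  have hp : P p = p := by
    refine tendsto_nhds_unique ?_ hw
    simpa only [Function.comp_def, hX.idem] using (P.continuous.tendsto p).comp hw
  obtain ⟨φ, hφ, y, hy⟩ := exists_weakly_tendsto_subseq hX.reflexive
    (x := fun n => w n - P (w n)) fun n => (hX.norm_sub_le _).trans (hC n)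
  have hPy : P y = 0 := SeparatingDual.eq_zero_of_forall_dual_eq_zero fun f =>
    tendsto_nhds_unique (hy (f.comp P)) (by simp [hX.idem])
  have hPl : P (p + y) = p := by rw [map_add, hp, hPy, add_zero]
  refine ⟨φ, p + y, hφ, hPl, ?_, fun f => ?_⟩
  · rw [hPl]
    exact hw.comp hφ.tendsto_atTop
  · rw [hPl, add_sub_cancel_left]
    exact hy f

theorem tendsto_of_tconv_of_le (hI : ∀ u, 0 ≤ I u) (h2 : CondI2 P I) (h3 : CondI3 P I)
    (h5 : CondI5 P I) {u : E} (hu : u ∈ Mset P I) {w : ℕ → E} {l : E} (hwl : TConv P w l)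
    (hl : P l = P u) {c : ℕ → ℝ} (hc : Tendsto c atTop (𝓝 (I u))) (hwc : ∀ n, I (w n) ≤ c n) :
    Tendsto w atTop (𝓝 u) := by
  have hbdd : IsBoundedUnder (· ≥ ·) atTop (fun n => I (w n)) :=
    isBoundedUnder_of ⟨0, fun n => hI _⟩
  have hliminf : liminf (fun n => I (w n)) atTop ≤ I u := by
    rw [← hc.liminf_eq]
    exact liminf_le_liminf (Eventually.of_forall hwc) hbdd hc.isBoundedUnder_le.isCoboundedUnder_ge
  obtain rfl : l = u := eq_of_mem_Mset_of_le h5 hu hl ((h2 w l hwl).trans hliminf)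
  refine h3 w l hwl (tendsto_order.2 ⟨fun a ha => ?_, fun b hb => ?_⟩)
  · exact eventually_lt_of_lt_liminf (ha.trans_le (h2 w l hwl)) hbdd
  · filter_upwards [hc.eventually (gt_mem_nhds hb)] with n hn
    exact (hwc n).trans_lt hn

theorem tendsto_comp_of_section_Mset (hX : SpaceHyp P) (h1 : CondI1 I) (h2 : CondI2 P I)
    (h3 : CondI3 P I) (h4 : CondI4 P I) (h5 : CondI5 P I)
    {m : E → E} (hm : ∀ up : E, P up = up → m up ∈ Mset P I ∧ P (m up) = up)
    {up : ℕ → E} {p : E} (hup : ∀ n, P (up n) = up n) (hp : P p = p)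
    (h : Tendsto up atTop (𝓝 p)) : Tendsto (fun n => m (up n)) atTop (𝓝 (m p)) := by
  obtain ⟨hu, hPu⟩ := hm p hp
  -- competitors in the fibers over `up n`, converging to `m p`
  set z : ℕ → E := fun n => up n + (m p - p)
  have hPz : ∀ n, P (z n) = P (m (up n)) := fun n => by
    simp only [z, map_add, map_sub, hPu, hp, hup, (hm _ (hup n)).2, sub_self, add_zero]
  have hIz : Tendsto (fun n => I (z n)) atTop (𝓝 (I (m p))) := by
    have := h.add_const (m p - p)
    rw [add_sub_cancel] at this
    exact (h1.1.continuous.tendsto _).comp this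
  have hle : ∀ n, I (m (up n)) ≤ I (z n) := fun n => le_of_mem_Mset h5 (hm _ (hup n)).1 (hPz n)
  obtain ⟨B, hB⟩ := hIz.bddAbove_range
  obtain ⟨B', hB'⟩ := h.norm.bddAbove_range
  obtain ⟨C, hC⟩ := exists_norm_le_of_condI4 h4 (w := fun n => m (up n)) (B := B' + B) fun n => by
    rw [(hm _ (hup n)).2]
    exact add_le_add (hB' (mem_range_self n)) ((hle n).trans (hB (mem_range_self n)))
  refine tendsto_of_subseq_tendsto fun ns hns => ?_
  have hPm : Tendsto (fun n => P (m (up (ns n)))) atTop (𝓝 p) := by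
    simpa only [Function.comp_def, (hm _ (hup _)).2] using h.comp hns
  obtain ⟨φ, l, hφ, hl, hTC⟩ := hX.exists_tconv_subseq hPm fun n => hC (ns n)
  exact ⟨φ, tendsto_of_tconv_of_le h1.2.2 h2 h3 h5 hu hTC (by rw [hl, hPu])
    (hIz.comp (hns.comp hφ.tendsto_atTop)) fun n => hle _⟩

end Fibers

/-- (cf. Proposition 4.1 b)).
Under (I1)–(I5), the map `m : X⁺ → M` sending `u⁺` to the unique point of `M` in `u⁺ + X̃`
is a homeomorphism (both `m` and its inverse `u ↦ u⁺` being continuous for the norm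
topologies), with inverse `M ∋ u ↦ u⁺ = P u`. -/
theorem statement1 (P : X →L[ℝ] X) (I : X → ℝ) (hX : SpaceHyp P)
    (h1 : CondI1 I) (h2 : CondI2 P I) (h3 : CondI3 P I) (h4 : CondI4 P I) (h5 : CondI5 P I)
    (m : X → X) (hm : ∀ up : X, P up = up → m up ∈ Mset P I ∧ P (m up) = up) :
    Set.BijOn m {u : X | P u = u} (Mset P I) ∧
    ContinuousOn m {u : X | P u = u} ∧
    ContinuousOn (fun u : X => P u) (Mset P I) ∧
    (∀ u ∈ Mset P I, m (P u) = u) := by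
  have hinv : ∀ u ∈ Mset P I, m (P u) = u := fun u hu =>
    eq_of_mem_Mset h5 hu (hm _ (hX.idem u)).1 (hm _ (hX.idem u)).2
  have hInvOn : InvOn (fun u : X => P u) m {u : X | P u = u} (Mset P I) :=
    ⟨fun u hu => (hm u hu).2, hinv⟩
  refine ⟨hInvOn.bijOn (fun u hu => (hm u hu).1) (fun u _ => hX.idem u), ?_,
    P.continuous.continuousOn, hinv⟩
  rw [continuousOn_iff_continuous_domRestrict, continuous_iff_seqContinuous]
  intro up p h
  exact tendsto_comp_of_section_Mset hX h1 h2 h3 h4 h5 hm (fun n => (up n).2) p.2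
    (tendsto_subtype_rng.1 h)

end
end

section
/- Assume conditions (I1)-(I5). Then the reduced functional J∘m : X⁺ → ℝ is of class C¹, and its derivative is given by (J∘m)'(u⁺)[w] = J'(m(u⁺))[w] for every u⁺ ∈ X⁺ and every w ∈ X⁺. -/
/-!
By (I5), `m u⁺` is the unique minimiser of `I`, hence the unique maximiser of `J`, on the fibre
`u⁺ + X̃`. The map `m` is continuous on `X⁺`: if `x_n → p` then `m x_n` is bounded by (I4), so by
reflexivity a subsequence 𝒯-converges to some `l` in the fibre of `p`; comparing with the points
`m p + (x_n - p)` and using (I2) gives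
`I (m p) ≤ I l ≤ liminf I (m x_n) ≤ limsup I (m x_n) ≤ I (m p)`,
so `l = m p` and (I3) turns 𝒯-convergence into norm convergence.

Fibrewise maximality then sandwiches `J (m (p + h)) - J (m p)` between `J (m p + h) - J (m p)` and
`J (m (p + h)) - J (m (p + h) - h)`. Both are `J'(m p) h + o(‖h‖)` because `J` is strictly
differentiable at `m p` and `m` is continuous, so `(J ∘ m)' = J' ∘ m` on `X⁺`, which is continuous.
-/

open Filter Topology Set

noncomputable section

variable {X : Type*} [NormedAddCommGroup X] [NormedSpace ℝ X] [CompleteSpace X]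

theorem TopologicalSpace.IsSeparable.exists_dual_seq_separating {𝕜 E : Type*} [RCLike 𝕜]
    [NormedAddCommGroup E] [NormedSpace 𝕜 E] {s : Set E} (hs : IsSeparable s) :
    ∃ f : ℕ → StrongDual 𝕜 E, ∀ x ∈ s, (∀ k, f k x = 0) → x = 0 := by
  obtain ⟨c, hc, hsc⟩ := hs
  obtain ⟨d, hd⟩ := (hc.insert 0).exists_eq_range (insert_nonempty 0 c)
  choose f hf_norm hf_eq using fun k => exists_dual_vector'' 𝕜 (d k)
  refine ⟨f, fun x hx hfx => ?_⟩
  have hclose : ∀ k, ‖x‖ ≤ 2 * ‖x - d k‖ := fun k => by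
    have : ‖d k‖ ≤ ‖x - d k‖ := calc
      ‖d k‖ = ‖f k (d k - x)‖ := by
        rw [map_sub, hfx, sub_zero, hf_eq, RCLike.norm_ofReal, abs_norm]
      _ ≤ ‖f k‖ * ‖d k - x‖ := (f k).le_opNorm _
      _ ≤ ‖x - d k‖ := by
        rw [norm_sub_rev]; exact mul_le_of_le_one_left (norm_nonneg _) (hf_norm k)
    linarith [norm_le_norm_sub_add x (d k)]
  have hxd : x ∈ closure (range d) := hd ▸ closure_mono (subset_insert 0 c) (hsc hx)
  by_contra hx0
  obtain ⟨_, ⟨k, rfl⟩, hk⟩ := Metric.mem_closure_iff.1 hxd (‖x‖ / 2) (by positivity)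
  linarith [hclose k, dist_eq_norm x (d k)]

theorem exists_subseq_weak_tendsto_of_isBounded {E : Type*} [NormedAddCommGroup E]
    [NormedSpace ℝ E] (hrefl : Function.Surjective (NormedSpace.inclusionInDoubleDual ℝ E))
    {v : ℕ → E} (hv : Bornology.IsBounded (range v)) :
    ∃ (σ : ℕ → ℕ) (y : E), StrictMono σ ∧
      ∀ φ : StrongDual ℝ E, Tendsto (fun k => φ (v (σ k))) atTop (𝓝 (φ y)) := by
  set Y : Submodule ℝ E := (Submodule.span ℝ (range v)).topologicalClosure
  have hYsep : TopologicalSpace.IsSeparable (Y : Set E) := by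
    rw [Submodule.topologicalClosure_coe]
    exact (countable_range v).isSeparable.span.closure
  obtain ⟨f, hf⟩ := hYsep.exists_dual_seq_separating (𝕜 := ℝ)
  set K := closure (toWeakSpace ℝ E '' range v)
  have hK : IsCompact K := by
    refine NormedSpace.isCompact_closure_of_isBounded ℝ E _ ?_ fun F _ => ?_
    · rwa [(toWeakSpace ℝ E).injective.preimage_image]
    · obtain ⟨x, hx⟩ := hrefl (StrongDual.toWeakDual.symm F)
      exact ⟨x, by rw [← StrongDual.toWeakDual.apply_symm_apply F, ← hx]; rfl⟩
  have hKY : K ⊆ toWeakSpace ℝ E '' Y := by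
    rw [Submodule.topologicalClosure_coe,
      (Submodule.span ℝ (range v)).convex.toWeakSpace_closure ℝ]
    exact closure_mono (image_mono Submodule.subset_span)
  -- `K` is weakly compact and the countably many `f k` separate its points, so it is metrizable
  have : CompactSpace K := isCompact_iff_compactSpace.mp hK
  have : TopologicalSpace.MetrizableSpace K := by
    refine Metric.PiNatEmbed.TopologicalSpace.MetrizableSpace.of_countable_separating
      (fun k (x : K) => f k ((toWeakSpace ℝ E).symm x))
      (fun k => (WeakBilin.eval_continuous (topDualPairing ℝ E).flip (f k)).comp
        continuous_subtype_val) fun x x' hxx' => ?_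
    obtain ⟨y, hy, hyx⟩ := hKY x.2
    obtain ⟨y', hy', hyx'⟩ := hKY x'.2
    by_contra! h
    refine hxx' (Subtype.ext ?_)
    have := hf (y - y') (Y.sub_mem hy hy') fun k => by
      simpa [← hyx, ← hyx', sub_eq_zero] using h k
    rw [← hyx, ← hyx', sub_eq_zero.1 this]
  have hKseq : IsSeqCompact K := by
    simpa using IsSeqCompact.range
      (continuous_iff_seqContinuous.mp (continuous_subtype_val (p := (· ∈ K))))
  obtain ⟨y, -, σ, hσ, hlim⟩ :=
    hKseq fun n => subset_closure (mem_image_of_mem _ (mem_range_self n))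
  exact ⟨σ, (toWeakSpace ℝ E).symm y, hσ, fun φ =>
    ((WeakBilin.eval_continuous (topDualPairing ℝ E).flip φ).tendsto y).comp hlim⟩

theorem tendsto_of_le_liminf_of_forall_le {f c : ℕ → ℝ} {a : ℝ} (ha : a ≤ liminf f atTop)
    (hf : IsBoundedUnder (· ≥ ·) atTop f) (hfc : ∀ n, f n ≤ c n)
    (hc : Tendsto c atTop (𝓝 a)) : Tendsto f atTop (𝓝 a) := by
  have hfc' : ∀ᶠ n in atTop, f n ≤ c n := Eventually.of_forall hfc
  refine tendsto_of_le_liminf_of_limsup_le ha ?_ (hc.isBoundedUnder_le.mono_le hfc') hf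
  exact hc.limsup_eq ▸ limsup_le_limsup hfc' hf.isCoboundedUnder_le hc.isBoundedUnder_le

theorem HasStrictFDerivAt.hasFDerivAt_comp_of_forall_le {E F : Type*} [NormedAddCommGroup E]
    [NormedSpace ℝ E] [NormedAddCommGroup F] [NormedSpace ℝ F] {J : F → ℝ} {J' : F →L[ℝ] ℝ}
    {g : E → F} {L : E →L[ℝ] F} {x : E} (hJ : HasStrictFDerivAt J J' (g x))
    (hg : ContinuousAt g x) (hle : ∀ y h, J (g y + L h) ≤ J (g (y + h))) :
    HasFDerivAt (J ∘ g) (J'.comp L) x := by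
  have hincr : ∀ {a b : E → F}, Tendsto (fun h => (a h, b h)) (𝓝 0) (𝓝 (g x, g x)) →
      (∀ h, a h - b h = L h) → (fun h => J (a h) - J (b h) - J' (L h)) =o[𝓝 0] fun h => h := by
    intro a b hab hL
    have := hJ.isLittleO.comp_tendsto hab
    simp only [Function.comp_def, hL] at this
    exact this.trans_isBigO (L.isBigO_id _)
  have hgx : Tendsto (fun h => g (x + h)) (𝓝 0) (𝓝 (g x)) :=
    hg.tendsto.comp (by simpa using (continuous_const_add x).tendsto 0)
  have hL : Tendsto L (𝓝 0) (𝓝 0) := by simpa using L.continuous.tendsto 0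
  have hlo := hincr (a := fun h => g x + L h) (b := fun _ => g x)
    (by simpa using (tendsto_const_nhds.add hL).prodMk_nhds tendsto_const_nhds) (by simp)
  have hup := hincr (a := fun h => g (x + h)) (b := fun h => g (x + h) - L h)
    (by simpa using hgx.prodMk_nhds (hgx.sub hL)) (by simp)
  rw [hasFDerivAt_iff_isLittleO_nhds_zero]
  refine (Asymptotics.isBigO_of_le _ fun h => ?_).trans_isLittleO (hlo.norm_left.add hup.norm_left)
  have h₁ := hle x h
  have h₂ := hle (x + h) (-h)
  rw [map_neg, ← sub_eq_add_neg, add_neg_cancel_right] at h₂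
  simp only [Function.comp_apply, ContinuousLinearMap.comp_apply, Real.norm_eq_abs]
  refine (abs_le.2 ⟨?_, ?_⟩).trans (le_abs_self _) <;>
    linarith [neg_abs_le (J (g x + L h) - J (g x) - J' (L h)),
      abs_nonneg (J (g x + L h) - J (g x) - J' (L h)),
      le_abs_self (J (g (x + h)) - J (g (x + h) - L h) - J' (L h)),
      abs_nonneg (J (g (x + h)) - J (g (x + h) - L h) - J' (L h))]

section Reduction

variable {E : Type*} [NormedAddCommGroup E] [NormedSpace ℝ E] {P : E →L[ℝ] E} {I : E → ℝ}
  {m : E → E}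

theorem SpaceHyp.apply_of_mem_range (hX : SpaceHyp P) {x : E}
    (hx : x ∈ LinearMap.range (P : E →ₗ[ℝ] E)) : P x = x := by
  obtain ⟨y, rfl⟩ := hx
  exact hX.idem y

theorem contDiff_Jf {n : WithTop ℕ∞} (hX : SpaceHyp P) (hI : ContDiff ℝ n I) :
    ContDiff ℝ n (Jf P I) := by
  set K := LinearMap.range (P : E →ₗ[ℝ] E)
  -- the norm of `X⁺` satisfies the parallelogram law, so `‖·‖²` is smooth on it
  let _ : InnerProductSpace ℝ K := InnerProductSpace.ofNorm ℝ fun x y => by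
    have h := hX.parallelogram x y (hX.apply_of_mem_range x.2) (hX.apply_of_mem_range y.2)
    simp only [Submodule.coe_norm]
    push_cast
    linarith
  let Pr : E →L[ℝ] K := P.codRestrict K (LinearMap.mem_range_self _)
  exact (((contDiff_norm_sq ℝ).comp Pr.contDiff).const_smul ((1 : ℝ) / 2)).sub hI

theorem SpaceHyp.exists_subseq_tconv (hX : SpaceHyp P) {w : ℕ → E}
    (hw : Bornology.IsBounded (range w)) {q : E} (hq : Tendsto (fun n => P (w n)) atTop (𝓝 q)) :
    ∃ (σ : ℕ → ℕ) (l : E), StrictMono σ ∧ P l = q ∧ TConv P (w ∘ σ) l := by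
  have hbdd : Bornology.IsBounded (range fun n => w n - P (w n)) := by
    refine ((ContinuousLinearMap.id ℝ E - P).lipschitz.isBounded_image hw).subset ?_
    rintro _ ⟨n, rfl⟩
    exact ⟨w n, mem_range_self n, rfl⟩
  obtain ⟨σ, y, hσ, hy⟩ := exists_subseq_weak_tendsto_of_isBounded hX.reflexive hbdd
  have hPq : P q = q :=
    tendsto_nhds_unique ((P.continuous.tendsto q).comp hq) <| by
      simpa [Function.comp_def, hX.idem] using hq
  have hPy : P y = 0 := SeparatingDual.eq_zero_of_forall_dual_eq_zero fun φ =>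
    tendsto_nhds_unique (hy (φ.comp P)) (by simp [hX.idem])
  refine ⟨σ, q + y, hσ, by simp [hPq, hPy], ?_, fun φ => ?_⟩
  · rw [map_add, hPq, hPy, add_zero]
    exact hq.comp hσ.tendsto_atTop
  · simpa [hPq, hPy] using hy φ

theorem CondI4.isBounded_range (h4 : CondI4 P I) {u : ℕ → E} {B : ℝ}
    (hB : ∀ n, ‖P (u n)‖ + I (u n) ≤ B) : Bornology.IsBounded (range u) := by
  by_contra hu
  rw [isBounded_iff_forall_norm_le] at hu
  push Not at hu
  choose x hx hlt using fun k : ℕ => hu k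
  choose n hn using hx
  have hnorm : Tendsto (fun k => ‖u (n k)‖) atTop atTop :=
    tendsto_atTop_mono (fun k => by rw [hn]; exact (hlt k).le) tendsto_natCast_atTop_atTop
  obtain ⟨k, hk⟩ := ((h4 _ hnorm).eventually_gt_atTop B).exists
  exact (hB (n k)).not_gt hk

theorem CondI5.apply_lt_of_ne (h5 : CondI5 P I) {u v : E} (hv : v ∈ Mset P I)
    (hu : P u = P v) (hne : u ≠ v) : I v < I u := by
  have := h5 v hv (u - v) (by rw [map_sub, hu, sub_self]) (sub_ne_zero.2 hne)
  rwa [add_sub_cancel] at this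

theorem CondI5.apply_le (h5 : CondI5 P I) {u v : E} (hv : v ∈ Mset P I) (hu : P u = P v) :
    I v ≤ I u := by
  rcases eq_or_ne u v with rfl | hne
  · exact le_rfl
  · exact (h5.apply_lt_of_ne hv hu hne).le

theorem CondI5.eq_of_apply_le (h5 : CondI5 P I) {u v : E} (hv : v ∈ Mset P I)
    (hu : P u = P v) (hle : I u ≤ I v) : u = v := by
  by_contra hne
  exact (h5.apply_lt_of_ne hv hu hne).not_ge hle

theorem CondI5.Jf_le (h5 : CondI5 P I) {u v : E} (hv : v ∈ Mset P I) (hu : P u = P v) :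
    Jf P I u ≤ Jf P I v := by
  have := h5.apply_le hv hu
  simp only [Jf, hu]
  linarith

theorem CondI5.Jf_m_add_le (h5 : CondI5 P I)
    (hm : ∀ up : E, P up = up → m up ∈ Mset P I ∧ P (m up) = up) {y h : E} (hy : P y = y)
    (hh : P h = h) : Jf P I (m y + h) ≤ Jf P I (m (y + h)) := by
  have hyh : P (y + h) = y + h := by rw [map_add, hy, hh]
  exact h5.Jf_le (hm _ hyh).1 (by rw [map_add, (hm y hy).2, hh, (hm _ hyh).2])

theorem tendsto_m_of_tendsto (hX : SpaceHyp P) (h1 : CondI1 I) (h2 : CondI2 P I)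
    (h3 : CondI3 P I) (h4 : CondI4 P I) (h5 : CondI5 P I)
    (hm : ∀ up : E, P up = up → m up ∈ Mset P I ∧ P (m up) = up) {x : ℕ → E} {p : E}
    (hx : ∀ n, P (x n) = x n) (hp : P p = p) (hxp : Tendsto x atTop (𝓝 p)) :
    Tendsto (fun n => m (x n)) atTop (𝓝 (m p)) := by
  have hc : Tendsto (fun n => I (m p + (x n - p))) atTop (𝓝 (I (m p))) := by
    simpa [Function.comp_def] using
      (h1.1.continuous.tendsto _).comp (tendsto_const_nhds.add (hxp.sub_const p))
  have hle : ∀ n, I (m (x n)) ≤ I (m p + (x n - p)) := fun n =>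
    h5.apply_le (hm _ (hx n)).1 <| by
      rw [map_add, map_sub, (hm p hp).2, (hm _ (hx n)).2, hx n, hp, add_sub_cancel]
  have hbdd : Bornology.IsBounded (range fun n => m (x n)) := by
    obtain ⟨B₁, hB₁⟩ := hc.bddAbove_range
    obtain ⟨B₂, hB₂⟩ := hxp.norm.bddAbove_range
    refine h4.isBounded_range (B := B₂ + B₁) fun n => ?_
    rw [(hm _ (hx n)).2]
    exact add_le_add (hB₂ (mem_range_self n)) ((hle n).trans (hB₁ (mem_range_self n)))
  refine tendsto_of_subseq_tendsto fun ns hns => ?_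
  obtain ⟨σ, l, hσ, hPl, hl⟩ := hX.exists_subseq_tconv
    (hbdd.subset (range_comp_subset_range ns _))
    (by simpa [Function.comp_def, (hm _ (hx _)).2] using hxp.comp hns)
  have hPl' : P l = P (m p) := hPl.trans (hm p hp).2.symm
  have hI : Tendsto (fun j => I (m (x (ns (σ j))))) atTop (𝓝 (I (m p))) :=
    tendsto_of_le_liminf_of_forall_le ((h5.apply_le (hm p hp).1 hPl').trans (h2 _ _ hl))
      (isBoundedUnder_of ⟨0, fun j => h1.2.2 _⟩) (fun j => hle _)
      (hc.comp (hns.comp hσ.tendsto_atTop))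
  obtain rfl : l = m p := h5.eq_of_apply_le (hm p hp).1 hPl' ((h2 _ _ hl).trans_eq hI.liminf_eq)
  exact ⟨σ, h3 _ _ hl hI⟩

theorem continuous_m_range (hX : SpaceHyp P) (h1 : CondI1 I) (h2 : CondI2 P I)
    (h3 : CondI3 P I) (h4 : CondI4 P I) (h5 : CondI5 P I)
    (hm : ∀ up : E, P up = up → m up ∈ Mset P I ∧ P (m up) = up) :
    Continuous fun y : LinearMap.range (P : E →ₗ[ℝ] E) => m y :=
  continuous_iff_seqContinuous.2 fun {y p} hy =>
    tendsto_m_of_tendsto hX h1 h2 h3 h4 h5 hm (fun n => hX.apply_of_mem_range (y n).2)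
      (hX.apply_of_mem_range p.2) ((continuous_subtype_val.tendsto p).comp hy)

end Reduction

/-- (cf. Proposition 4.1 c), d)).
Under (I1)–(I5), the reduced functional `J ∘ m : X⁺ → ℝ` is of class `C¹` and
`(J ∘ m)'(u⁺)[w] = J'(m(u⁺))[w]` for all `u⁺, w ∈ X⁺`.  Here `X⁺` is viewed as the
(closed) range of the projection `P`. -/
theorem statement2 (P : X →L[ℝ] X) (I : X → ℝ) (hX : SpaceHyp P)
    (h1 : CondI1 I) (h2 : CondI2 P I) (h3 : CondI3 P I) (h4 : CondI4 P I) (h5 : CondI5 P I)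
    (m : X → X) (hm : ∀ up : X, P up = up → m up ∈ Mset P I ∧ P (m up) = up) :
    ContDiff ℝ 1 (fun x : LinearMap.range (P : X →ₗ[ℝ] X) => Jf P I (m x)) ∧
    ∀ up w : LinearMap.range (P : X →ₗ[ℝ] X),
      fderiv ℝ (fun x : LinearMap.range (P : X →ₗ[ℝ] X) => Jf P I (m x)) up w
        = fderiv ℝ (Jf P I) (m up) (w : X) := by
  set K := LinearMap.range (P : X →ₗ[ℝ] X)
  have hJ : ContDiff ℝ 1 (Jf P I) := contDiff_Jf hX h1.1
  have hmK := continuous_m_range hX h1 h2 h3 h4 h5 hm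
  have hderiv : ∀ x : K, HasFDerivAt (fun y : K => Jf P I (m y))
      ((fderiv ℝ (Jf P I) (m x)).comp K.subtypeL) x := fun x =>
    (hJ.hasStrictFDerivAt one_ne_zero).hasFDerivAt_comp_of_forall_le hmK.continuousAt
      fun y h => h5.Jf_m_add_le hm (hX.apply_of_mem_range y.2) (hX.apply_of_mem_range h.2)
  refine ⟨contDiff_one_iff_fderiv.2 ⟨fun x => (hderiv x).differentiableAt, ?_⟩,
    fun up w => by rw [(hderiv up).fderiv]; rfl⟩
  rw [funext fun x => (hderiv x).fderiv]
  exact ((hJ.continuous_fderiv one_ne_zero).comp hmK).clm_comp continuous_const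

end
end

section
/- Assume conditions (I1)-(I5). Then: (i) a sequence (u_n⁺) ⊂ X⁺ is a Palais-Smale sequence for J∘m (i.e. ((J∘m)(u_n⁺)) is bounded and (J∘m)'(u_n⁺) → 0 in (X⁺)*) if and only if (m(u_n⁺)) is a Palais-Smale sequence for J contained in M (i.e. (J(m(u_n⁺))) is bounded and J'(m(u_n⁺)) → 0 in X*); (ii) u⁺ ∈ X⁺ is a critical point of J∘m if and only if m(u⁺) is a critical point of J. -/
open Filter Topology Set

noncomputable section

variable {X : Type*} [NormedAddCommGroup X] [NormedSpace ℝ X] [CompleteSpace X]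

set_option maxHeartbeats 1000000
set_option synthInstance.maxHeartbeats 400000
open NormedSpace

lemma cluster_eq_limit {α : Type*} [TopologicalSpace α] [T2Space α] {a b : α} {u : ℕ → α}
    (h : ClusterPt a (Filter.map u atTop)) (h2 : Tendsto u atTop (𝓝 b)) : a = b :=
  eq_of_nhds_neBot (h.mono h2)

lemma cluster_mem_closed {α : Type*} [TopologicalSpace α] {a : α} {u : ℕ → α} {F : Set α}
    (h : ClusterPt a (Filter.map u atTop)) (hF : IsClosed F) (hu : ∀ n, u n ∈ F) : a ∈ F := by
  have h1 : Filter.map u atTop ≤ 𝓟 F := tendsto_principal.mpr (Eventually.of_forall hu)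
  exact hF.closure_eq ▸ mem_closure_iff_clusterPt.mpr (h.mono h1)

lemma weak_seq_cpt (hrefl : Function.Surjective (NormedSpace.inclusionInDoubleDual ℝ X))
    {x : ℕ → X} {C : ℝ} (hb : ∀ n, ‖x n‖ ≤ C) :
    ∃ (φ : ℕ → ℕ) (l : X), StrictMono φ ∧
      ∀ f : StrongDual ℝ X, Tendsto (fun k => f (x (φ k))) atTop (𝓝 (f l)) := by
  classical
  have hC0 : 0 ≤ C := le_trans (norm_nonneg _) (hb 0)
  set Y : Submodule ℝ X := (Submodule.span ℝ (Set.range x)).topologicalClosure with hYdef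
  have hYclosed : IsClosed (Y : Set X) := Submodule.isClosed_topologicalClosure _
  have hxY : ∀ n, x n ∈ Y := fun n =>
    Submodule.le_topologicalClosure _ (Submodule.subset_span ⟨n, rfl⟩)
  obtain ⟨c, hc_count, hc_sub⟩ :=
    ((Set.countable_range x).isSeparable.span (R := ℝ)).closure
  have hYc : (Y : Set X) ⊆ closure c := by
    rw [hYdef, Submodule.topologicalClosure_coe]; exact hc_sub
  have hne : (insert (0:X) c).Nonempty := ⟨0, mem_insert _ _⟩
  obtain ⟨y, hy⟩ := (hc_count.insert 0).exists_eq_range hne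
  choose g hg1 hg2 using fun i : ℕ => exists_dual_vector'' ℝ (y i)
  have hg2' : ∀ i, g i (y i) = ‖y i‖ := fun i => by simpa using hg2 i
  -- separation on Y
  have hsepar : ∀ z ∈ (Y : Set X), z ≠ 0 → ∃ i, g i z ≠ 0 := by
    intro z hz hz0
    have hzc : z ∈ closure (insert (0:X) c) := closure_mono (subset_insert _ _) (hYc hz)
    have hzpos : 0 < ‖z‖ := norm_pos_iff.mpr hz0
    have hz3 : 0 < ‖z‖ / 3 := by positivity
    obtain ⟨p, hp, hdist⟩ := Metric.mem_closure_iff.mp hzc (‖z‖/3) hz3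
    rw [hy] at hp; obtain ⟨i, rfl⟩ := hp
    refine ⟨i, ?_⟩
    have h1 : g i z = g i (y i) + g i (z - y i) := by rw [← map_add]; congr 1; abel
    have h2 : |g i (z - y i)| ≤ ‖z - y i‖ := by
      calc |g i (z - y i)| ≤ ‖g i‖ * ‖z - y i‖ := (g i).le_opNorm _
        _ ≤ 1 * ‖z - y i‖ := by
            exact mul_le_mul_of_nonneg_right (hg1 i) (norm_nonneg _)
        _ = ‖z - y i‖ := one_mul _
    have h3 : ‖z - y i‖ < ‖z‖ / 3 := by rwa [← dist_eq_norm]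
    have h4 : ‖z‖ - ‖z - y i‖ ≤ ‖y i‖ := by
      have := norm_sub_norm_le z (z - y i)
      simpa using this
    have : 0 < g i z := by
      rw [h1, hg2' i]
      have := abs_le.mp h2
      linarith
    exact ne_of_gt this
  -- Step 1: diagonal convergence for the countable family
  set G : ℕ → (ℕ → ℝ) := fun n i => g i (x n) with hG
  have hGmem : ∀ n, G n ∈ Set.pi Set.univ (fun _ : ℕ => Set.Icc (-C) C) := by
    intro n i _
    have : |g i (x n)| ≤ C := by
      calc |g i (x n)| ≤ ‖g i‖ * ‖x n‖ := (g i).le_opNorm _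
        _ ≤ 1 * C := mul_le_mul (hg1 i) (hb n) (norm_nonneg _) zero_le_one
        _ = C := one_mul _
    exact abs_le.mp this
  have hKcomp : IsCompact (Set.pi Set.univ fun _ : ℕ => Set.Icc (-C) C) :=
    isCompact_univ_pi fun _ => isCompact_Icc
  obtain ⟨a, -, φ, hφmono, hφconv⟩ := hKcomp.tendsto_subseq hGmem
  have hgconv : ∀ i, Tendsto (fun k => g i (x (φ k))) atTop (𝓝 (a i)) := by
    intro i; exact (tendsto_pi_nhds.mp hφconv) i
  -- Step 2: weak compactness of K
  set e : X ≃ₗᵢ[ℝ] StrongDual ℝ (StrongDual ℝ X) :=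
    LinearIsometryEquiv.ofSurjective (inclusionInDoubleDualLi ℝ (E := X)) hrefl with he
  have he_app : ∀ (z : X) (f : StrongDual ℝ X), e z f = f z := fun z f => rfl
  set A : Set (WeakDual ℝ (StrongDual ℝ X)) :=
    ⇑WeakDual.toStrongDual ⁻¹' Metric.closedBall 0 C with hA
  have hAcomp : IsCompact A := WeakDual.isCompact_closedBall 0 C
  set h : WeakDual ℝ (StrongDual ℝ X) → WeakSpace ℝ X :=
    fun Λ => toWeakSpace ℝ X (e.symm (WeakDual.toStrongDual Λ)) with hh
  have hh_eval : ∀ (Λ : WeakDual ℝ (StrongDual ℝ X)) (f : StrongDual ℝ X),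
      f (e.symm (WeakDual.toStrongDual Λ)) = Λ f := by
    intro Λ f
    conv_lhs => rw [← he_app (e.symm (WeakDual.toStrongDual Λ)) f]
    rw [e.apply_symm_apply]
    rfl
  have hhcont : Continuous h := by
    apply WeakBilin.continuous_of_continuous_eval
    intro f
    have heq : (fun Λ : WeakDual ℝ (StrongDual ℝ X) =>
        ((topDualPairing ℝ X).flip (h Λ)) f) = fun Λ => Λ f := by
      funext Λ; exact hh_eval Λ f
    rw [heq]
    exact WeakDual.eval_continuous f
  set S : Set (WeakSpace ℝ X) := h '' A with hS
  have hScomp : IsCompact S := hAcomp.image hhcont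
  have hmemS : ∀ z : X, ‖z‖ ≤ C → toWeakSpace ℝ X z ∈ S := by
    intro z hz
    refine ⟨StrongDual.toWeakDual (e z), ?_, ?_⟩
    · show WeakDual.toStrongDual (StrongDual.toWeakDual (e z)) ∈ Metric.closedBall 0 C
      apply (mem_closedBall_zero_iff (E := StrongDual ℝ (StrongDual ℝ X))).mpr
      show ‖(WeakDual.toStrongDual (StrongDual.toWeakDual (e z)) : StrongDual ℝ (StrongDual ℝ X))‖ ≤ C
      have : WeakDual.toStrongDual (StrongDual.toWeakDual (e z)) = e z := rfl
      rw [this, e.norm_map]; exact hz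
    · show toWeakSpace ℝ X (e.symm (WeakDual.toStrongDual (StrongDual.toWeakDual (e z)))) = _
      have : WeakDual.toStrongDual (StrongDual.toWeakDual (e z)) = e z := rfl
      rw [this, e.symm_apply_apply]
  set YW : Set (WeakSpace ℝ X) := (toWeakSpace ℝ X) '' (Y : Set X) with hYW
  have hYWclosed : IsClosed YW := by
    rw [← isOpen_compl_iff]
    rw [isOpen_iff_forall_mem_open]
    intro w₀ hw₀
    have hz₀ : ((toWeakSpace ℝ X).symm w₀ : X) ∉ (Y : Set X) := by
      intro hzY
      exact hw₀ ⟨(toWeakSpace ℝ X).symm w₀, hzY, by simp⟩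
    obtain ⟨f, u, hfu, hu⟩ :=
      geometric_hahn_banach_closed_point (Y.convex) hYclosed hz₀
    refine ⟨{w : WeakSpace ℝ X | u < (topDualPairing ℝ X).flip w f}, ?_, ?_, ?_⟩
    · intro w hw hwY
      obtain ⟨z, hzY, rfl⟩ := hwY
      have : (topDualPairing ℝ X).flip (toWeakSpace ℝ X z) f = f z := rfl
      rw [mem_setOf_eq, this] at hw
      exact absurd (hfu z hzY) (not_lt.mpr hw.le)
    · exact isOpen_lt continuous_const (WeakBilin.eval_continuous _ f)
    · show u < (topDualPairing ℝ X).flip w₀ f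
      have : (topDualPairing ℝ X).flip w₀ f = f ((toWeakSpace ℝ X).symm w₀) := rfl
      rw [this]; exact hu
  set K : Set (WeakSpace ℝ X) := S ∩ YW with hK
  have hKcomp2 : IsCompact K := hScomp.inter_right hYWclosed
  have cluster : ∀ q : ℕ → WeakSpace ℝ X, (∀ k, q k ∈ K) →
      ∃ lw ∈ K, ClusterPt lw (Filter.map q atTop) := by
    intro q hq
    haveI : (Filter.map q atTop).NeBot := map_neBot
    exact hKcomp2 (le_principal_iff.mpr (mem_map.mpr (Eventually.of_forall hq)))
  have hmemK : ∀ n : ℕ, toWeakSpace ℝ X (x n) ∈ K :=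
    fun n => ⟨hmemS _ (hb n), ⟨x n, hxY n, rfl⟩⟩
  -- evaluation of cluster points
  have hevalcl : ∀ (q : ℕ → WeakSpace ℝ X) (lw : WeakSpace ℝ X),
      ClusterPt lw (Filter.map q atTop) → ∀ f : StrongDual ℝ X,
      ClusterPt ((topDualPairing ℝ X).flip lw f)
        (Filter.map (fun k => (topDualPairing ℝ X).flip (q k) f) atTop) := by
    intro q lw hcl f
    have hmap : Tendsto (fun w : WeakSpace ℝ X => (topDualPairing ℝ X).flip w f)
        (Filter.map q atTop) (Filter.map (fun k => (topDualPairing ℝ X).flip (q k) f) atTop) := by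
      rw [Filter.tendsto_map'_iff]; exact tendsto_map
    exact hcl.map (WeakBilin.eval_continuous _ f).continuousAt hmap
  obtain ⟨lw, hlwK, hlwcl⟩ := cluster (fun k => toWeakSpace ℝ X (x (φ k))) (fun k => hmemK _)
  obtain ⟨lz, hlzY, hlzw⟩ := hlwK.2
  have hpair : ∀ (z : X) (f : StrongDual ℝ X),
      (topDualPairing ℝ X).flip (toWeakSpace ℝ X z) f = f z := fun z f => rfl
  have hgl : ∀ i, g i lz = a i := by
    intro i
    have h1 := hevalcl _ _ hlwcl (g i)
    rw [← hlzw] at h1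
    rw [hpair] at h1
    exact cluster_eq_limit h1 (hgconv i)
  refine ⟨φ, lz, hφmono, ?_⟩
  intro f
  by_contra hnot
  rw [Metric.tendsto_atTop] at hnot
  push_neg at hnot
  obtain ⟨ε, hε, hfreq⟩ := hnot
  have hfreq' : ∃ᶠ n in atTop, ε ≤ dist (f (x (φ n))) (f lz) := by
    rw [frequently_atTop]
    intro N; obtain ⟨n, hn1, hn2⟩ := hfreq N; exact ⟨n, hn1, hn2⟩
  obtain ⟨ψ, hψmono, hψ⟩ := extraction_of_frequently_atTop hfreq'
  obtain ⟨lw', hlw'K, hcl'⟩ := cluster (fun k => toWeakSpace ℝ X (x (φ (ψ k)))) (fun k => hmemK _)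
  obtain ⟨lz', hlz'Y, hlz'w⟩ := hlw'K.2
  have hgl' : ∀ i, g i lz' = a i := by
    intro i
    have h1 := hevalcl _ _ hcl' (g i)
    rw [← hlz'w, hpair] at h1
    exact cluster_eq_limit h1 ((hgconv i).comp hψmono.tendsto_atTop)
  have hzz : lz' = lz := by
    by_contra hne
    obtain ⟨i, hi⟩ := hsepar (lz' - lz) (Y.sub_mem hlz'Y hlzY) (sub_ne_zero.mpr hne)
    apply hi
    rw [map_sub, hgl i, hgl' i, sub_self]
  have hfc : ClusterPt (f lz') (Filter.map (fun k => f (x (φ (ψ k)))) atTop) := by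
    have h1 := hevalcl _ _ hcl' f
    rw [← hlz'w, hpair] at h1
    exact h1
  have hmemF : f lz' ∈ {t : ℝ | ε ≤ dist t (f lz)} := by
    refine cluster_mem_closed hfc ?_ ?_
    · exact isClosed_le continuous_const (continuous_id.dist continuous_const)
    · intro k; exact hψ k
  rw [hzz] at hmemF
  simp only [mem_setOf_eq, dist_self] at hmemF
  linarith

lemma range_fix {P : X →L[ℝ] X} (hX : SpaceHyp P) {x : X} (hx : x ∈ LinearMap.range (P : X →ₗ[ℝ] X)) :
    P x = x := by
  obtain ⟨y, rfl⟩ := hx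
  exact hX.idem y

lemma exists_qderiv {P : X →L[ℝ] X} (hX : SpaceHyp P) :
    ∃ D : X → (X →L[ℝ] ℝ),
      (∀ u, HasFDerivAt (fun w : X => ‖P w‖ ^ 2) (D u) u) ∧
      (∀ u v, P v = 0 → D u v = 0) ∧
      (∀ u u', ‖D u - D u'‖ ≤ 2 * ‖P‖ ^ 2 * ‖u - u'‖) := by
  classical
  set E := LinearMap.range (P : X →ₗ[ℝ] X) with hE
  letI : InnerProductSpace ℝ ↥E := InnerProductSpace.ofNorm ℝ (by
    intro a b
    have ha : P (a : X) = a := range_fix hX a.2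
    have hb : P (b : X) = b := range_fix hX b.2
    have := hX.parallelogram (a : X) (b : X) ha hb
    have h1 : ‖a + b‖ = ‖(a : X) + b‖ := rfl
    have h2 : ‖a - b‖ = ‖(a : X) - b‖ := rfl
    have h3 : ‖a‖ = ‖(a : X)‖ := rfl
    have h4 : ‖b‖ = ‖(b : X)‖ := rfl
    rw [h1, h2, h3, h4]
    nlinarith [this])
  set Pe : X →L[ℝ] ↥E := P.codRestrict E (fun x => LinearMap.mem_range_self P.toLinearMap x)
    with hPe
  have hPe_norm : ∀ w : X, ‖Pe w‖ = ‖P w‖ := fun w => rfl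
  have hPe_bound : ∀ w : X, ‖Pe w‖ ≤ ‖P‖ * ‖w‖ := fun w => by
    rw [hPe_norm]; exact P.le_opNorm w
  refine ⟨fun u => ((2 : ℝ) • (innerSL ℝ (Pe u))).comp Pe, ?_, ?_, ?_⟩
  · intro u
    rw [hasFDerivAt_iff_isLittleO_nhds_zero]
    have key : ∀ h : X, ‖P (u + h)‖ ^ 2 - ‖P u‖ ^ 2
        - (((2 : ℝ) • (innerSL ℝ (Pe u))).comp Pe) h = ‖Pe h‖ ^ 2 := by
      intro h
      have h1 : Pe (u + h) = Pe u + Pe h := by rw [map_add]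
      have h2 : ‖P (u + h)‖ = ‖Pe u + Pe h‖ := by rw [← hPe_norm, h1]
      have h3 : ‖Pe u + Pe h‖ ^ 2 = ‖Pe u‖ ^ 2 + 2 * inner ℝ (Pe u) (Pe h) + ‖Pe h‖ ^ 2 :=
        norm_add_sq_real _ _
      have h4 : (((2 : ℝ) • (innerSL ℝ (Pe u))).comp Pe) h = 2 * inner ℝ (Pe u) (Pe h) := by
        simp [ContinuousLinearMap.smul_apply, real_inner_smul_left]
      rw [h2, h3, h4, hPe_norm u]
      ring
    have : (fun h : X => ‖P (u + h)‖ ^ 2 - ‖P u‖ ^ 2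
        - (((2 : ℝ) • (innerSL ℝ (Pe u))).comp Pe) h) = fun h => ‖Pe h‖ ^ 2 := funext key
    rw [this]
    rw [Asymptotics.isLittleO_iff]
    intro c hc
    have hball : Metric.closedBall (0 : X) (c / (‖P‖ ^ 2 + 1)) ∈ 𝓝 (0 : X) :=
      Metric.closedBall_mem_nhds _ (by positivity)
    filter_upwards [hball] with h hh
    rw [Metric.mem_closedBall, dist_zero_right] at hh
    have h5 : ‖Pe h‖ ^ 2 ≤ (‖P‖ * ‖h‖) ^ 2 := by
      have := hPe_bound h
      nlinarith [norm_nonneg (Pe h), norm_nonneg h, norm_nonneg P]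
    have h6 : ‖‖Pe h‖ ^ 2‖ = ‖Pe h‖ ^ 2 := by
      rw [Real.norm_eq_abs, abs_of_nonneg (by positivity)]
    rw [h6]
    have h7 : (‖P‖ * ‖h‖) ^ 2 = ‖P‖ ^ 2 * ‖h‖ * ‖h‖ := by ring
    have h8 : ‖P‖ ^ 2 * ‖h‖ ≤ c := by
      have h9 : ‖P‖ ^ 2 * ‖h‖ ≤ ‖P‖ ^ 2 * (c / (‖P‖ ^ 2 + 1)) :=
        mul_le_mul_of_nonneg_left hh (by positivity)
      have h10 : ‖P‖ ^ 2 * (c / (‖P‖ ^ 2 + 1)) ≤ c := by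
        rw [div_eq_mul_inv]
        rw [show ‖P‖ ^ 2 * (c * (‖P‖ ^ 2 + 1)⁻¹) = c * (‖P‖ ^ 2 * (‖P‖ ^ 2 + 1)⁻¹) by ring]
        have : ‖P‖ ^ 2 * (‖P‖ ^ 2 + 1)⁻¹ ≤ 1 := by
          rw [mul_inv_le_iff₀ (by positivity)]
          linarith
        nlinarith
      linarith
    calc ‖Pe h‖ ^ 2 ≤ (‖P‖ * ‖h‖) ^ 2 := h5
      _ = ‖P‖ ^ 2 * ‖h‖ * ‖h‖ := h7
      _ ≤ c * ‖h‖ := mul_le_mul_of_nonneg_right h8 (norm_nonneg h)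
  · intro u v hv
    have : Pe v = 0 := by
      apply Subtype.ext
      show P v = (0 : ↥E)
      rw [hv]; rfl
    simp [this]
  · intro u u'
    apply ContinuousLinearMap.opNorm_le_bound _ (by positivity)
    intro v
    have hlhs : (((2 : ℝ) • innerSL ℝ (Pe u)).comp Pe - ((2 : ℝ) • innerSL ℝ (Pe u')).comp Pe) v
        = 2 * inner ℝ (Pe u - Pe u') (Pe v) := by
      simp [ContinuousLinearMap.sub_apply, ContinuousLinearMap.smul_apply,
        real_inner_smul_left, inner_sub_left]
      ring
    rw [hlhs]
    have h1 : |(inner ℝ (Pe u - Pe u') (Pe v) : ℝ)| ≤ ‖Pe u - Pe u'‖ * ‖Pe v‖ := abs_real_inner_le_norm _ _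
    have h2 : ‖Pe u - Pe u'‖ = ‖P (u - u')‖ := by rw [← map_sub]; exact hPe_norm _
    have h3 : ‖P (u - u')‖ ≤ ‖P‖ * ‖u - u'‖ := P.le_opNorm _
    have h4 : ‖Pe v‖ ≤ ‖P‖ * ‖v‖ := hPe_bound v
    rw [Real.norm_eq_abs, abs_mul, abs_two]
    calc 2 * |(inner ℝ (Pe u - Pe u') (Pe v) : ℝ)| ≤ 2 * (‖Pe u - Pe u'‖ * ‖Pe v‖) := by linarith
      _ ≤ 2 * ((‖P‖ * ‖u - u'‖) * (‖P‖ * ‖v‖)) := by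
          apply mul_le_mul_of_nonneg_left _ (by norm_num)
          apply mul_le_mul (h2 ▸ h3) h4 (norm_nonneg _)
          positivity
      _ = 2 * ‖P‖ ^ 2 * ‖u - u'‖ * ‖v‖ := by ring

lemma m_max {P : X →L[ℝ] X} {I : X → ℝ} (h5 : CondI5 P I)
    {m : X → X} (hm : ∀ up : X, P up = up → m up ∈ Mset P I ∧ P (m up) = up)
    {up w : X} (hup : P up = up) (hw : P w = up) :
    Jf P I w ≤ Jf P I (m up) ∧ (w ≠ m up → Jf P I w < Jf P I (m up)) := by
  obtain ⟨hmM, hmP⟩ := hm up hup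
  by_cases hwe : w = m up
  · subst hwe; exact ⟨le_rfl, fun h => absurd rfl h⟩
  · have hPv : P (w - m up) = 0 := by rw [map_sub, hw, hmP, sub_self]
    have hvne : w - m up ≠ 0 := sub_ne_zero.mpr hwe
    have hI := h5 (m up) hmM (w - m up) hPv hvne
    have hw' : m up + (w - m up) = w := by abel
    rw [hw'] at hI
    have hnorm : ‖P w‖ = ‖P (m up)‖ := by rw [hw, hmP]
    have : Jf P I w < Jf P I (m up) := by
      simp only [Jf, hnorm]
      linarith
    exact ⟨this.le, fun _ => this⟩

lemma m_cont {P : X →L[ℝ] X} {I : X → ℝ} (hX : SpaceHyp P)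
    (h1 : CondI1 I) (h2 : CondI2 P I) (h3 : CondI3 P I) (h4 : CondI4 P I) (h5 : CondI5 P I)
    {m : X → X} (hm : ∀ up : X, P up = up → m up ∈ Mset P I ∧ P (m up) = up)
    {w : ℕ → X} {l : X} (hw : ∀ n, P (w n) = w n) (hl : P l = l)
    (hconv : Tendsto w atTop (𝓝 l)) :
    Tendsto (fun n => m (w n)) atTop (𝓝 (m l)) := by
  have hJcont : Continuous (Jf P I) := by
    have : Continuous fun u : X => (1 / 2 : ℝ) * ‖P u‖ ^ 2 :=
      continuous_const.mul ((P.continuous.norm).pow 2)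
    exact this.sub (h1.1.continuous)
  -- the shifted competitor
  set ut : X := m l - l with hut
  have hPut : P ut = 0 := by rw [hut, map_sub, (hm l hl).2, hl, sub_self]
  set b : ℕ → ℝ := fun n => (1 / 2 : ℝ) * ‖w n‖ ^ 2 - Jf P I (w n + ut) with hb
  have hbconv : Tendsto b atTop (𝓝 (I (m l))) := by
    have h1' : Tendsto (fun n => (1 / 2 : ℝ) * ‖w n‖ ^ 2) atTop (𝓝 ((1 / 2 : ℝ) * ‖l‖ ^ 2)) :=
      ((hconv.norm).pow 2).const_mul _
    have h2' : Tendsto (fun n => Jf P I (w n + ut)) atTop (𝓝 (Jf P I (l + ut))) :=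
      (hJcont.tendsto _).comp (hconv.add_const ut)
    have h3' : l + ut = m l := by rw [hut]; abel
    rw [h3'] at h2'
    have h4' : (1 / 2 : ℝ) * ‖l‖ ^ 2 - Jf P I (m l) = I (m l) := by
      have : ‖P (m l)‖ = ‖l‖ := by rw [(hm l hl).2]
      simp only [Jf, this]
      ring
    have := h1'.sub h2'
    rwa [h4'] at this
  have hIb : ∀ n, I (m (w n)) ≤ b n := by
    intro n
    have hPwn : P (w n + ut) = w n := by rw [map_add, hw n, hPut, add_zero]
    have h0 := (m_max h5 hm (hw n) hPwn).1
    have e1 : Jf P I (m (w n)) = (1 / 2 : ℝ) * ‖w n‖ ^ 2 - I (m (w n)) := by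
      simp only [Jf, (hm (w n) (hw n)).2]
    have e2 : b n = (1 / 2 : ℝ) * ‖w n‖ ^ 2 - Jf P I (w n + ut) := rfl
    rw [e2]
    rw [e1] at h0
    linarith
  obtain ⟨B, hB⟩ : ∃ B, ∀ n, b n ≤ B := by
    obtain ⟨B, hB⟩ := hbconv.bddAbove_range
    exact ⟨B, fun n => hB ⟨n, rfl⟩⟩
  obtain ⟨W, hW⟩ : ∃ W, ∀ n, ‖w n‖ ≤ W := by
    obtain ⟨W, hWb⟩ := (hconv.norm).bddAbove_range
    exact ⟨W, fun n => hWb ⟨n, rfl⟩⟩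
  -- boundedness of m (w n)
  obtain ⟨C, hC⟩ : ∃ C, ∀ n, ‖m (w n)‖ ≤ C := by
    by_contra hnb
    push_neg at hnb
    have hex : ∀ k : ℕ, ∃ n, (k : ℝ) < ‖m (w n)‖ := fun k => hnb k
    choose ψ hψ using hex
    have htend : Tendsto (fun k => ‖m (w (ψ k))‖) atTop atTop :=
      tendsto_atTop_mono (fun k => (hψ k).le) tendsto_natCast_atTop_atTop
    have := h4 (fun k => m (w (ψ k))) htend
    have hub : ∀ k, ‖P (m (w (ψ k)))‖ + I (m (w (ψ k))) ≤ W + B := by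
      intro k
      have e1 : ‖P (m (w (ψ k)))‖ = ‖w (ψ k)‖ := by rw [(hm _ (hw _)).2]
      have := hIb (ψ k)
      rw [e1]
      have := hB (ψ k)
      have := hW (ψ k)
      linarith [hIb (ψ k), hB (ψ k)]
    obtain ⟨k, hk⟩ := (this.eventually_gt_atTop (W + B)).exists
    exact absurd (hub k) (not_le.mpr hk)
  -- subsequence argument
  apply tendsto_of_subseq_tendsto
  intro ns hns
  obtain ⟨φ, l', hφmono, hφconv⟩ := weak_seq_cpt hX.reflexive (x := fun k => m (w (ns k))) (C := C)
    (fun k => hC _)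
  set v : ℕ → X := fun k => m (w (ns (φ k))) with hv
  have hvweak : ∀ f : StrongDual ℝ X, Tendsto (fun k => f (v k)) atTop (𝓝 (f l')) :=
    hφconv
  have hwsub : Tendsto (fun k => w (ns (φ k))) atTop (𝓝 l) :=
    hconv.comp (hns.comp hφmono.tendsto_atTop)
  have hPv : ∀ k, P (v k) = w (ns (φ k)) := fun k => (hm _ (hw _)).2
  have ht2 : ∀ f : StrongDual ℝ X,
      Tendsto (fun k => f (P (v k))) atTop (𝓝 (f l)) := by
    intro f
    have h := (f.continuous.tendsto l).comp hwsub
    have heq : (fun k => f (P (v k))) = fun k => f (w (ns (φ k))) := by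
      funext k; rw [hPv k]
    rw [heq]; exact h
  have hPl' : P l' = l := by
    rw [NormedSpace.eq_iff_forall_dual_eq ℝ]
    intro f
    have t1 : Tendsto (fun k => f (P (v k))) atTop (𝓝 (f (P l'))) := hφconv (f.comp P)
    exact tendsto_nhds_unique t1 (ht2 f)
  have hTC : TConv P v l' := by
    constructor
    · have heq : (fun k => P (v k)) = fun k => w (ns (φ k)) := funext hPv
      rw [heq, hPl']
      exact hwsub
    · intro f
      have t1 : Tendsto (fun k => f (v k) - f (P (v k))) atTop (𝓝 (f l' - f l)) :=
        (hφconv f).sub (ht2 f)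
      have heq : (fun k => f (v k) - f (P (v k))) = fun k => f (v k - P (v k)) := by
        funext k; rw [map_sub]
      have heq2 : f l' - f l = f (l' - P l') := by rw [map_sub, hPl']
      rw [heq, heq2] at t1
      exact t1
  have hI2 := h2 v l' hTC
  have hbsub : Tendsto (fun k => b (ns (φ k))) atTop (𝓝 (I (m l))) :=
    hbconv.comp (hns.comp hφmono.tendsto_atTop)
  have hIub : ∀ k, I (v k) ≤ b (ns (φ k)) := fun k => hIb _
  have hIlb : Filter.IsBoundedUnder (· ≥ ·) atTop (fun k => I (v k)) :=
    Filter.isBoundedUnder_of ⟨0, fun k => h1.2.2 (v k)⟩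
  have hIub' : Filter.IsBoundedUnder (· ≤ ·) atTop (fun k => I (v k)) :=
    Filter.isBoundedUnder_of ⟨B, fun k => le_trans (hIub k) (hB _)⟩
  have hliminf_le : Filter.liminf (fun k => I (v k)) atTop ≤ I (m l) := by
    have hle := Filter.liminf_le_liminf (Filter.Eventually.of_forall hIub) hIlb
      (hbsub.isCoboundedUnder_ge)
    rwa [hbsub.liminf_eq] at hle
  have hIl' : I l' ≤ I (m l) := le_trans (hI2) hliminf_le
  have hl'eq : l' = m l := by
    by_contra hne
    have hJl' : Jf P I l' < Jf P I (m l) := (m_max h5 hm hl hPl').2 hne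
    have e1 : Jf P I l' = (1 / 2 : ℝ) * ‖l‖ ^ 2 - I l' := by simp only [Jf, hPl']
    have e2 : Jf P I (m l) = (1 / 2 : ℝ) * ‖l‖ ^ 2 - I (m l) := by
      simp only [Jf, (hm l hl).2]
    rw [e1, e2] at hJl'
    linarith
  have hIconv : Tendsto (fun k => I (v k)) atTop (𝓝 (I (m l))) := by
    apply tendsto_of_le_liminf_of_limsup_le
    · rw [← hl'eq]; exact hI2
    · have hls := Filter.limsup_le_limsup (Filter.Eventually.of_forall hIub)
        (hIlb.isCoboundedUnder_le) (hbsub.isBoundedUnder_le)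
      rwa [hbsub.limsup_eq] at hls
    · exact hIub'
    · exact hIlb
  have hfin := h3 v (m l) (hl'eq ▸ hTC) hIconv
  exact ⟨φ, hfin⟩

lemma norm_comp_subtypeL {P : X →L[ℝ] X} (hX : SpaceHyp P) (g : X →L[ℝ] ℝ)
    (hker : ∀ v, P v = 0 → g v = 0) :
    ‖g.comp (LinearMap.range (P : X →ₗ[ℝ] X)).subtypeL‖ = ‖g‖ := by
  have hPcontr : ∀ v : X, ‖P v‖ ≤ ‖v‖ := fun v => by
    nlinarith [hX.pyth v, norm_nonneg (P v), norm_nonneg v, norm_nonneg (v - P v)]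
  apply le_antisymm
  · apply ContinuousLinearMap.opNorm_le_bound _ (norm_nonneg g)
    intro z
    have h0 : (g.comp (LinearMap.range (P : X →ₗ[ℝ] X)).subtypeL) z = g (z : X) := rfl
    rw [h0]
    calc ‖g (z : X)‖ ≤ ‖g‖ * ‖(z : X)‖ := g.le_opNorm _
      _ = ‖g‖ * ‖z‖ := rfl
  · apply ContinuousLinearMap.opNorm_le_bound g
      (norm_nonneg (g.comp (LinearMap.range (P : X →ₗ[ℝ] X)).subtypeL))
    intro v
    have h1 : g v = g (P v) := by
      have hk : P (v - P v) = 0 := by rw [map_sub, hX.idem, sub_self]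
      have h2 := hker (v - P v) hk
      rw [map_sub] at h2
      linarith
    have h3 : g (P v) = (g.comp (LinearMap.range (P : X →ₗ[ℝ] X)).subtypeL)
        (⟨P v, LinearMap.mem_range_self _ v⟩ : LinearMap.range (P : X →ₗ[ℝ] X)) := rfl
    calc ‖g v‖ = ‖(g.comp (LinearMap.range (P : X →ₗ[ℝ] X)).subtypeL)
          (⟨P v, LinearMap.mem_range_self _ v⟩ : LinearMap.range (P : X →ₗ[ℝ] X))‖ := by rw [h1, h3]
      _ ≤ ‖g.comp (LinearMap.range (P : X →ₗ[ℝ] X)).subtypeL‖ * ‖(⟨P v, LinearMap.mem_range_self _ v⟩ :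
            LinearMap.range (P : X →ₗ[ℝ] X))‖ := ContinuousLinearMap.le_opNorm _ _
      _ = ‖g.comp (LinearMap.range (P : X →ₗ[ℝ] X)).subtypeL‖ * ‖P v‖ := rfl
      _ ≤ ‖g.comp (LinearMap.range (P : X →ₗ[ℝ] X)).subtypeL‖ * ‖v‖ :=
          mul_le_mul_of_nonneg_left (hPcontr v) (ContinuousLinearMap.opNorm_nonneg _)

lemma psi_deriv {P : X →L[ℝ] X} {I : X → ℝ} (hX : SpaceHyp P)
    (h1 : CondI1 I) (h2 : CondI2 P I) (h3 : CondI3 P I) (h4 : CondI4 P I) (h5 : CondI5 P I)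
    {m : X → X} (hm : ∀ up : X, P up = up → m up ∈ Mset P I ∧ P (m up) = up)
    {Jd : X → X →L[ℝ] ℝ} (hJd : ∀ u, HasFDerivAt (Jf P I) (Jd u) u)
    (hJdcont : Continuous Jd) (x₀ : LinearMap.range (P : X →ₗ[ℝ] X)) :
    HasFDerivAt (fun x : LinearMap.range (P : X →ₗ[ℝ] X) => Jf P I (m x))
      ((Jd (m x₀)).comp (LinearMap.range (P : X →ₗ[ℝ] X)).subtypeL) x₀ := by
  have hfix : ∀ z : LinearMap.range (P : X →ₗ[ℝ] X), P (z : X) = z := fun z => range_fix hX z.2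
  set u : X := m x₀ with hu
  have hPu : P u = (x₀ : X) := (hm _ (hfix x₀)).2
  have hmc : Tendsto (fun z : LinearMap.range (P : X →ₗ[ℝ] X) => m (z : X)) (𝓝 x₀) (𝓝 u) := by
    rw [Filter.tendsto_iff_seq_tendsto]
    intro zs hzs
    exact m_cont hX h1 h2 h3 h4 h5 hm (fun n => hfix (zs n)) (hfix x₀)
      ((continuous_subtype_val.tendsto x₀).comp hzs)
  rw [hasFDerivAt_iff_isLittleO_nhds_zero, Asymptotics.isLittleO_iff]
  intro ε hε
  obtain ⟨δ, hδpos, hδ⟩ := Metric.continuousAt_iff.mp hJdcont.continuousAt ε hε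
  set δ' : ℝ := δ / 2 with hδ'
  have hδ'pos : 0 < δ' := by positivity
  have hJdball : ∀ ξ ∈ Metric.closedBall u δ', ‖Jd ξ - Jd u‖ ≤ ε := by
    intro ξ hξ
    rw [Metric.mem_closedBall] at hξ
    have : dist ξ u < δ := lt_of_le_of_lt hξ (by linarith)
    have := hδ this
    rw [dist_eq_norm] at this
    exact this.le
  obtain ⟨ρ, hρpos, hρ⟩ := Metric.tendsto_nhds_nhds.mp hmc (δ' / 2) (by positivity)
  set r : ℝ := min (ρ / 2) (δ' / 2) with hr
  have hrpos : 0 < r := lt_min (by positivity) (by positivity)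
  filter_upwards [Metric.closedBall_mem_nhds (0 : LinearMap.range (P : X →ₗ[ℝ] X)) hrpos] with h hh
  rw [Metric.mem_closedBall, dist_zero_right] at hh
  set uh : X := m ((x₀ + h : LinearMap.range (P : X →ₗ[ℝ] X)) : X) with huh
  have hhr1 : ‖h‖ ≤ ρ / 2 := le_trans hh (min_le_left _ _)
  have hhr2 : ‖h‖ ≤ δ' / 2 := le_trans hh (min_le_right _ _)
  have hhx : dist (x₀ + h) x₀ < ρ := by
    rw [dist_eq_norm, add_sub_cancel_left]
    linarith
  have huhu : ‖uh - u‖ ≤ δ' / 2 := by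
    have := hρ hhx
    rw [dist_eq_norm] at this
    exact this.le
  have hnormh : ‖((h : LinearMap.range (P : X →ₗ[ℝ] X)) : X)‖ = ‖h‖ := rfl
  set s : Set X := Metric.closedBall u δ' with hs
  have hsconv : Convex ℝ s := convex_closedBall _ _
  have hmem1 : u ∈ s := Metric.mem_closedBall_self hδ'pos.le
  have hmem2 : u + (h : X) ∈ s := by
    rw [Metric.mem_closedBall, dist_eq_norm, add_sub_cancel_left]
    calc ‖(h : X)‖ = ‖h‖ := rfl
      _ ≤ δ' / 2 := hhr2
      _ ≤ δ' := by linarith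
  have hmem3 : uh ∈ s := by
    rw [Metric.mem_closedBall, dist_eq_norm]
    linarith
  have hmem4 : uh - (h : X) ∈ s := by
    rw [Metric.mem_closedBall, dist_eq_norm]
    have : uh - (h : X) - u = (uh - u) - (h : X) := by abel
    rw [this]
    calc ‖(uh - u) - (h : X)‖ ≤ ‖uh - u‖ + ‖(h : X)‖ := norm_sub_le _ _
      _ ≤ δ' / 2 + δ' / 2 := add_le_add huhu (hnormh ▸ hhr2)
      _ = δ' := by ring
  have hfd : ∀ ξ ∈ s, HasFDerivWithinAt (Jf P I) (Jd ξ) s ξ :=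
    fun ξ _ => (hJd ξ).hasFDerivWithinAt
  have hupper := Convex.norm_image_sub_le_of_norm_hasFDerivWithin_le'
    hfd hJdball hsconv hmem4 hmem3
  have hlower := Convex.norm_image_sub_le_of_norm_hasFDerivWithin_le'
    hfd hJdball hsconv hmem1 hmem2
  rw [show uh - (uh - (h : X)) = (h : X) by abel] at hupper
  rw [show u + (h : X) - u = (h : X) by abel] at hlower
  -- maximality inequalities
  have hPxh : P (((x₀ + h : LinearMap.range (P : X →ₗ[ℝ] X)) : X)) = ((x₀ + h : LinearMap.range (P : X →ₗ[ℝ] X)) : X) :=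
    hfix _
  have hPuh : P uh = ((x₀ + h : LinearMap.range (P : X →ₗ[ℝ] X)) : X) := (hm _ hPxh).2
  have hcoe : ((x₀ + h : LinearMap.range (P : X →ₗ[ℝ] X)) : X) = (x₀ : X) + (h : X) := rfl
  have hub : Jf P I (uh - (h : X)) ≤ Jf P I u := by
    have hP4 : P (uh - (h : X)) = (x₀ : X) := by
      rw [map_sub, hPuh, hcoe]
      have : P ((h : LinearMap.range (P : X →ₗ[ℝ] X)) : X) = (h : X) := hfix h
      rw [this]; abel
    exact (m_max h5 hm (hfix x₀) hP4).1
  have hlb : Jf P I (u + (h : X)) ≤ Jf P I uh := by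
    have hP2 : P (u + (h : X)) = ((x₀ + h : LinearMap.range (P : X →ₗ[ℝ] X)) : X) := by
      rw [map_add, hPu, hfix h, hcoe]
    exact (m_max h5 hm hPxh hP2).1
  -- combine
  have happ : ((Jd u).comp (LinearMap.range (P : X →ₗ[ℝ] X)).subtypeL) h = Jd u ((h : X)) := rfl
  rw [Real.norm_eq_abs] at hupper hlower ⊢
  rw [happ]
  have hA1 : Jf P I uh - Jf P I u - Jd u ((h : X)) ≤ ε * ‖(h : X)‖ := by
    have := (abs_le.mp hupper).2
    linarith
  have hA2 : -(ε * ‖(h : X)‖) ≤ Jf P I uh - Jf P I u - Jd u ((h : X)) := by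
    have := (abs_le.mp hlower).1
    linarith
  rw [abs_le]
  constructor <;> [skip; skip] <;> first
    | (calc (-(ε * ‖h‖) : ℝ) = -(ε * ‖(h : X)‖) := by rw [hnormh]
        _ ≤ _ := hA2)
    | (calc Jf P I uh - Jf P I u - Jd u ((h : X)) ≤ ε * ‖(h : X)‖ := hA1
        _ = ε * ‖h‖ := by rw [hnormh])


/-- (cf. Proposition 4.1 e), f)).
Under (I1)–(I5): (i) `(u_n⁺) ⊂ X⁺` is a Palais–Smale sequence for `J ∘ m` iff
`(m(u_n⁺))` is a Palais–Smale sequence for `J` in `M`; (ii) `u⁺` is a critical point of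
`J ∘ m` iff `m(u⁺)` is a critical point of `J`. -/
theorem statement3 (P : X →L[ℝ] X) (I : X → ℝ) (hX : SpaceHyp P)
    (h1 : CondI1 I) (h2 : CondI2 P I) (h3 : CondI3 P I) (h4 : CondI4 P I) (h5 : CondI5 P I)
    (m : X → X) (hm : ∀ up : X, P up = up → m up ∈ Mset P I ∧ P (m up) = up) :
    (∀ u : ℕ → LinearMap.range (P : X →ₗ[ℝ] X),
      ((∃ C : ℝ, ∀ n, |Jf P I (m (u n))| ≤ C) ∧
        Tendsto (fun n => ‖fderiv ℝ (fun x : LinearMap.range (P : X →ₗ[ℝ] X) => Jf P I (m x)) (u n)‖)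
          atTop (𝓝 0))
      ↔ ((∀ n, m (u n) ∈ Mset P I) ∧ (∃ C : ℝ, ∀ n, |Jf P I (m (u n))| ≤ C) ∧
          Tendsto (fun n => ‖fderiv ℝ (Jf P I) (m (u n))‖) atTop (𝓝 0))) ∧
    (∀ up : LinearMap.range (P : X →ₗ[ℝ] X),
      fderiv ℝ (fun x : LinearMap.range (P : X →ₗ[ℝ] X) => Jf P I (m x)) up = 0
        ↔ fderiv ℝ (Jf P I) (m up) = 0) := by
  classical
  obtain ⟨D, hD, hDker, hDlip⟩ := exists_qderiv hX
  set Jd : X → X →L[ℝ] ℝ := fun u => (1 / 2 : ℝ) • D u - fderiv ℝ I u with hJdd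
  have hJd : ∀ u, HasFDerivAt (Jf P I) (Jd u) u := by
    intro u
    have hq : HasFDerivAt (fun w : X => (1 / 2 : ℝ) * ‖P w‖ ^ 2) ((1 / 2 : ℝ) • D u) u :=
      (hD u).const_mul _
    have hI' : HasFDerivAt I (fderiv ℝ I u) u := (h1.1.differentiable one_ne_zero u).hasFDerivAt
    exact hq.sub hI'
  have hfderivJ : ∀ u, fderiv ℝ (Jf P I) u = Jd u := fun u => (hJd u).fderiv
  have hJdcont : Continuous Jd := by
    have hDcont : Continuous D := by
      have hlip : LipschitzWith (2 * ‖P‖ ^ 2).toNNReal D := by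
        apply LipschitzWith.of_dist_le_mul
        intro a b
        rw [dist_eq_norm, dist_eq_norm]
        have hc : ((2 * ‖P‖ ^ 2).toNNReal : ℝ) = 2 * ‖P‖ ^ 2 :=
          Real.coe_toNNReal _ (by positivity)
        rw [hc]
        exact hDlip a b
      exact hlip.continuous
    exact (hDcont.const_smul (1 / 2 : ℝ)).sub (h1.1.continuous_fderiv one_ne_zero)
  have hJdker : ∀ u ∈ Mset P I, ∀ v, P v = 0 → Jd u v = 0 := by
    intro u hu v hv
    simp only [hJdd, ContinuousLinearMap.sub_apply, ContinuousLinearMap.smul_apply,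
      hDker u v hv, hu v hv, smul_zero, sub_zero]
  have hfix : ∀ z : LinearMap.range (P : X →ₗ[ℝ] X), P (z : X) = z := fun z => range_fix hX z.2
  have hpsi : ∀ x₀ : LinearMap.range (P : X →ₗ[ℝ] X),
      HasFDerivAt (fun x : LinearMap.range (P : X →ₗ[ℝ] X) => Jf P I (m x))
        ((Jd (m x₀)).comp (LinearMap.range (P : X →ₗ[ℝ] X)).subtypeL) x₀ :=
    psi_deriv hX h1 h2 h3 h4 h5 hm hJd hJdcont
  have hfderivPsi : ∀ x₀ : LinearMap.range (P : X →ₗ[ℝ] X),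
      fderiv ℝ (fun x : LinearMap.range (P : X →ₗ[ℝ] X) => Jf P I (m x)) x₀
        = (Jd (m x₀)).comp (LinearMap.range (P : X →ₗ[ℝ] X)).subtypeL := fun x₀ => (hpsi x₀).fderiv
  have hnormeq : ∀ x₀ : LinearMap.range (P : X →ₗ[ℝ] X),
      ‖fderiv ℝ (fun x : LinearMap.range (P : X →ₗ[ℝ] X) => Jf P I (m x)) x₀‖
        = ‖fderiv ℝ (Jf P I) (m x₀)‖ := by
    intro x₀
    rw [hfderivPsi, hfderivJ]
    exact norm_comp_subtypeL hX _ (fun v hv => hJdker _ ((hm _ (hfix x₀)).1) v hv)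
  constructor
  · intro u
    constructor
    · rintro ⟨hCb, hten⟩
      refine ⟨fun n => (hm _ (hfix (u n))).1, hCb, ?_⟩
      have heq : (fun n => ‖fderiv ℝ (Jf P I) (m (u n))‖)
          = fun n => ‖fderiv ℝ (fun x : LinearMap.range (P : X →ₗ[ℝ] X) => Jf P I (m x)) (u n)‖ :=
        funext fun n => (hnormeq (u n)).symm
      rw [heq]
      exact hten
    · rintro ⟨-, hCb, hten⟩
      refine ⟨hCb, ?_⟩
      have heq : (fun n => ‖fderiv ℝ (fun x : LinearMap.range (P : X →ₗ[ℝ] X) => Jf P I (m x)) (u n)‖)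
          = fun n => ‖fderiv ℝ (Jf P I) (m (u n))‖ := funext fun n => hnormeq (u n)
      rw [heq]
      exact hten
  · intro up
    constructor
    · intro h0
      have hn : ‖fderiv ℝ (Jf P I) (m up)‖ = 0 := by
        rw [← hnormeq up, h0, ContinuousLinearMap.opNorm_zero]
      exact (ContinuousLinearMap.opNorm_zero_iff _).mp hn
    · intro h0
      have hn : ‖fderiv ℝ (fun x : LinearMap.range (P : X →ₗ[ℝ] X) => Jf P I (m x)) up‖ = 0 := by
        rw [hnormeq up, h0, ContinuousLinearMap.opNorm_zero]
      exact (ContinuousLinearMap.opNorm_zero_iff _).mp hn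

end
end

section
/- Assume conditions (I1)-(I4), (I6), (I8) and (I9). Then for every u⁺ ∈ SX⁺ := {u ∈ X⁺ : ‖u‖ = 1}, the functional J constrained to the subspace ℝu⁺ + X̃ has precisely two critical points with positive energy (i.e. points u ∈ ℝu⁺ + X̃ with J(u) > 0 and J'(u)[w] = 0 for all w ∈ ℝu⁺ + X̃), namely u₁ = t₁u⁺ + v₁ and u₂ = t₂u⁺ + v₂ with t₁ > 0 > t₂ and v₁, v₂ ∈ X̃; u₁ is the unique global maximum of J on {tu⁺ + v : t ≥ 0, v ∈ X̃} and u₂ is the unique global maximum of J on {−tu⁺ + v : t ≥ 0, v ∈ X̃}; u₁ and u₂ depend continuously on u⁺ ∈ SX⁺; and, setting n(u⁺) := u₁, one has N = {n(u⁺) : u⁺ ∈ SX⁺}. -/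
open Filter Topology Set

noncomputable section

variable {X : Type*} [NormedAddCommGroup X] [NormedSpace ℝ X] [CompleteSpace X]

open scoped InnerProductSpace
set_option linter.unusedSectionVars false
set_option maxHeartbeats 1000000
set_option synthInstance.maxHeartbeats 400000

lemma eq_zero_of_forall_dual_eq_zero {x : X} (h : ∀ φ : X →L[ℝ] ℝ, φ x = 0) : x = 0 := by
  by_contra hx
  obtain ⟨g, _, hgx⟩ := exists_dual_vector ℝ x (norm_ne_zero_iff.mpr hx)
  rw [h g] at hgx
  exact hx (norm_eq_zero.mp hgx.symm)

lemma exists_dual_annihilator {W : Submodule ℝ X} (hW : IsClosed (W : Set X)) {x : X}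
    (hx : x ∉ W) : ∃ φ : X →L[ℝ] ℝ, (∀ w ∈ W, φ w = 0) ∧ φ x ≠ 0 := by
  obtain ⟨f, u, hfx, hfb⟩ := geometric_hahn_banach_point_closed (W.convex) hW hx
  have hW0 : ∀ w ∈ W, f w = 0 := by
    intro w hw
    by_contra hfw
    have h1 : u < f (((u - 1) / f w) • w) := hfb _ (W.smul_mem _ hw)
    rw [map_smul, smul_eq_mul, div_mul_cancel₀ _ hfw] at h1
    linarith
  have h0 : u < 0 := by simpa using hfb 0 W.zero_mem
  exact ⟨f, hW0, by linarith⟩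

theorem exists_weak_subseq (hrefl : Function.Surjective (NormedSpace.inclusionInDoubleDual ℝ X))
    (v : ℕ → X) (M : ℝ) (hb : ∀ n, ‖v n‖ ≤ M) :
    ∃ (ψ : ℕ → ℕ) (l : X), StrictMono ψ ∧
      ∀ φ : X →L[ℝ] ℝ, Tendsto (fun n => φ (v (ψ n))) atTop (𝓝 (φ l)) := by
  classical
  set W : Submodule ℝ X := (Submodule.span ℝ (Set.range v)).topologicalClosure with hWdef
  have hWc : IsClosed (W : Set X) := Submodule.isClosed_topologicalClosure _
  have hvW : ∀ n, v n ∈ W := fun n =>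
    Submodule.le_topologicalClosure _ (Submodule.subset_span ⟨n, rfl⟩)
  -- separability
  have hsep : TopologicalSpace.IsSeparable (W : Set X) := by
    have h1 : TopologicalSpace.IsSeparable (Submodule.span ℝ (Set.range v) : Set X) :=
      ((Set.countable_range v).isSeparable).span
    have := h1.closure
    rwa [hWdef, Submodule.topologicalClosure_coe]
  obtain ⟨c, hc_count, hWsub⟩ := hsep
  have hcne : c.Nonempty := by
    rcases Set.eq_empty_or_nonempty c with hce | hce
    · exfalso
      have := hWsub (W.zero_mem)
      rw [hce, closure_empty] at this
      exact this
    · exact hce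
  obtain ⟨e, he⟩ := Set.Countable.exists_eq_range hc_count hcne
  -- norming functionals
  have hgex : ∀ k : ℕ, ∃ g : X →L[ℝ] ℝ, ‖g‖ ≤ 1 ∧ g (e k) = ‖e k‖ := fun k =>
    exists_dual_vector'' ℝ (e k)
  choose g hg1 hg2 using hgex
  -- norming property
  have hnorming : ∀ x ∈ W, (∀ k, g k x = 0) → x = 0 := by
    intro x hxW hgx
    have hxcl : x ∈ closure (Set.range e) := by rw [← he]; exact hWsub hxW
    have hx2 : ∀ ε : ℝ, 0 < ε → ‖x‖ ≤ 2 * ε := by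
      intro ε hε
      rw [Metric.mem_closure_iff] at hxcl
      obtain ⟨y, ⟨k, rfl⟩, hy⟩ := hxcl ε hε
      rw [dist_eq_norm] at hy
      have h3 : |g k x - g k (e k)| ≤ ‖x - e k‖ := by
        calc |g k x - g k (e k)| = ‖g k (x - e k)‖ := by rw [map_sub]; rfl
        _ ≤ ‖g k‖ * ‖x - e k‖ := (g k).le_opNorm _
        _ ≤ 1 * ‖x - e k‖ := by
            exact mul_le_mul_of_nonneg_right (hg1 k) (norm_nonneg _)
        _ = ‖x - e k‖ := one_mul _
      rw [hgx k, hg2 k] at h3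
      have h4 : ‖e k‖ ≤ ε := by
        calc ‖e k‖ = |0 - ‖e k‖| := by simp [abs_of_nonneg (norm_nonneg _)]
        _ ≤ ‖x - e k‖ := h3
        _ ≤ ε := hy.le
      calc ‖x‖ ≤ ‖x - e k‖ + ‖e k‖ := by
            simpa using norm_add_le (x - e k) (e k)
      _ ≤ ε + ε := add_le_add hy.le h4
      _ = 2 * ε := by ring
    by_contra hx0
    have hpos : 0 < ‖x‖ := norm_pos_iff.mpr hx0
    have := hx2 (‖x‖ / 4) (by positivity)
    linarith
  -- diagonal extraction via compactness of a product of intervals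
  set M' : ℝ := max M 0 with hM'
  have hbM' : ∀ n, ‖v n‖ ≤ M' := fun n => (hb n).trans (le_max_left _ _)
  have hFb : ∀ n, (fun k => g k (v n)) ∈ Set.univ.pi fun _ : ℕ => Metric.closedBall (0 : ℝ) M' := by
    intro n k _
    simp only [Metric.mem_closedBall, dist_zero_right, Real.norm_eq_abs]
    calc |g k (v n)| ≤ ‖g k‖ * ‖v n‖ := (g k).le_opNorm _
    _ ≤ 1 * M' := mul_le_mul (hg1 k) (hbM' n) (norm_nonneg _) zero_le_one
    _ = M' := one_mul _
  obtain ⟨L, _, ψ, hψ, hconv⟩ :=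
    (isCompact_univ_pi fun _ : ℕ => isCompact_closedBall (0 : ℝ) M').tendsto_subseq hFb
  have hk : ∀ k, Tendsto (fun n => g k (v (ψ n))) atTop (𝓝 (L k)) := by
    intro k
    have := tendsto_pi_nhds.mp hconv k
    exact this
  -- the closed subspace `W` as a complete normed space
  haveI : CompleteSpace W := hWc.completeSpace_coe
  set vv : ℕ → W := fun n => ⟨v (ψ n), hvW _⟩ with hvv
  have hvvb : ∀ n, ‖vv n‖ ≤ M' := fun n => hbM' (ψ n)
  -- the restriction operator X* → W*
  set Rc : (X →L[ℝ] ℝ) →L[ℝ] (W →L[ℝ] ℝ) :=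
    (ContinuousLinearMap.compL ℝ W X ℝ).flip W.subtypeL with hRcdef
  have hRc : ∀ (φ : (X →L[ℝ] ℝ)) (w : W), Rc φ w = φ w := fun φ w => rfl
  -- reflexivity of W
  have hWrefl : ∀ Λ : ((W →L[ℝ] ℝ) →L[ℝ] ℝ),
      ∃ w : W, ∀ gg : (W →L[ℝ] ℝ), Λ gg = gg w := by
    intro Λ
    obtain ⟨x, hx⟩ := hrefl (Λ.comp Rc)
    have hx' : ∀ φ : (X →L[ℝ] ℝ), φ x = Λ (Rc φ) := by
      intro φ
      have : NormedSpace.inclusionInDoubleDual ℝ X x φ = (Λ.comp Rc) φ := by rw [hx]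
      simpa [NormedSpace.dual_def] using this
    have hxW : x ∈ W := by
      by_contra hxW
      obtain ⟨φ, hφ0, hφx⟩ := exists_dual_annihilator hWc hxW
      have hRφ : Rc φ = 0 := by
        ext w
        simpa [hRc] using hφ0 w w.2
      have : φ x = 0 := by rw [hx', hRφ, map_zero]
      exact hφx this
    refine ⟨⟨x, hxW⟩, fun gg => ?_⟩
    obtain ⟨φ, hφ, -⟩ := exists_extension_norm_eq W gg
    have hRφ : Rc φ = gg := by
      ext w
      simpa [hRc] using hφ w
    rw [← hRφ, ← hx' φ]
    exact (hRc φ ⟨x, hxW⟩).symm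
  -- the subspace of functionals along which the sequence converges
  have hSc : ∀ gg : (W →L[ℝ] ℝ),
      (∃ L : ℝ, Tendsto (fun n => gg (vv n)) atTop (𝓝 L)) ↔
        CauchySeq fun n => gg (vv n) :=
    fun gg => ⟨fun ⟨L, hL⟩ => hL.cauchySeq, fun h => cauchySeq_tendsto_of_complete h⟩
  set Ssub : Submodule ℝ ((W →L[ℝ] ℝ)) :=
    { carrier := {gg | ∃ L : ℝ, Tendsto (fun n => gg (vv n)) atTop (𝓝 L)}
      add_mem' := by
        rintro gg gg' ⟨L, hL⟩ ⟨L', hL'⟩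
        exact ⟨L + L', by simpa using hL.add hL'⟩
      zero_mem' := ⟨0, by simpa using tendsto_const_nhds⟩
      smul_mem' := by
        rintro t gg ⟨L, hL⟩
        exact ⟨t * L, by simpa using hL.const_mul t⟩ } with hSsubdef
  haveI : SequentialSpace (W →L[ℝ] ℝ) := @FrechetUrysohnSpace.to_sequentialSpace _ _
    (@FirstCountableTopology.frechetUrysohnSpace _ _ (@UniformSpace.firstCountableTopology _
      (ContinuousLinearMap.toPseudoMetricSpace).toUniformSpace _))
  have hSclosed : IsClosed (Ssub : Set ((W →L[ℝ] ℝ))) := by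
    rw [← isSeqClosed_iff_isClosed]
    intro gs gg hgs hggl
    show ∃ L : ℝ, Tendsto (fun n => gg (vv n)) atTop (𝓝 L)
    rw [hSc]
    rw [Metric.cauchySeq_iff]
    intro ε hε
    obtain ⟨j, hj⟩ := ((Metric.tendsto_atTop (α := W →L[ℝ] ℝ)).mp hggl) (ε / 4 / (M' + 1))
      (by positivity)
    have hMp : (0:ℝ) < M' + 1 := by positivity
    have hclose : ∀ n, |gg (vv n) - gs j (vv n)| ≤ ε / 4 := by
      intro n
      have h1 : |gg (vv n) - gs j (vv n)| = ‖(gg - gs j) (vv n)‖ := by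
        simp [Real.norm_eq_abs]
      rw [h1]
      calc ‖(gg - gs j) (vv n)‖ ≤ ‖gg - gs j‖ * ‖vv n‖ := (gg - gs j).le_opNorm _
      _ ≤ (ε / 4 / (M' + 1)) * (M' + 1) := by
          apply mul_le_mul _ _ (norm_nonneg _) (by positivity)
          · rw [← dist_eq_norm (E := W →L[ℝ] ℝ)]
            rw [dist_comm]
            exact (hj j le_rfl).le
          · exact (hvvb n).trans (by linarith)
      _ = ε / 4 := by field_simp
    obtain ⟨L, hL⟩ := hgs j
    obtain ⟨N, hN⟩ := (Metric.tendsto_atTop.mp hL) (ε / 4) (by positivity)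
    refine ⟨N, fun m hm m' hm' => ?_⟩
    have h1 := hclose m
    have h2 := hclose m'
    have h3 := hN m hm
    have h4 := hN m' hm'
    rw [Real.dist_eq] at h3 h4 ⊢
    calc |gg (vv m) - gg (vv m')| ≤
        |gg (vv m) - gs j (vv m)| + |gs j (vv m) - L| + |L - gs j (vv m')| +
          |gs j (vv m') - gg (vv m')| := by
          have := abs_sub_le (gg (vv m)) (gs j (vv m)) (gg (vv m'))
          have h5 := abs_sub_le (gs j (vv m)) L (gs j (vv m'))
          have h6 := abs_sub_le L (gs j (vv m')) (gg (vv m'))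
          have h7 := abs_sub_le (gs j (vv m)) (gs j (vv m')) (gg (vv m'))
          nlinarith [abs_sub_le (gg (vv m)) (gs j (vv m)) (gg (vv m')),
            abs_sub_le (gs j (vv m)) L (gs j (vv m')),
            abs_sub_comm (gs j (vv m')) (gg (vv m'))]
    _ < ε := by
        have h4' : |L - gs j (vv m')| < ε / 4 := by rwa [abs_sub_comm] at h4
        have h2' : |gs j (vv m') - gg (vv m')| ≤ ε / 4 := by rwa [abs_sub_comm] at h2
        linarith
  -- all the norming functionals restricted to W converge along the subsequence
  have hgS : ∀ k, Rc (g k) ∈ Ssub := fun k => ⟨L k, by simpa [hRc] using hk k⟩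
  -- density: every functional on W converges along the subsequence
  have hall : ∀ gg : (W →L[ℝ] ℝ),
      ∃ L : ℝ, Tendsto (fun n => gg (vv n)) atTop (𝓝 L) := by
    intro gg
    set V : Submodule ℝ ((W →L[ℝ] ℝ)) :=
      (Submodule.span ℝ (Set.range fun k => Rc (g k))).topologicalClosure with hVdef
    have hVclosed : IsClosed (V : Set ((W →L[ℝ] ℝ))) :=
      Submodule.isClosed_topologicalClosure _
    have hVS : V ≤ Ssub := by
      apply Submodule.topologicalClosure_minimal
      · rw [Submodule.span_le]
        rintro _ ⟨k, rfl⟩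
        exact hgS k
      · exact hSclosed
    have hggV : gg ∈ V := by
      by_contra hggV
      obtain ⟨Λ, hΛ0, hΛgg⟩ := exists_dual_annihilator (X := W →L[ℝ] ℝ) hVclosed hggV
      obtain ⟨w, hw⟩ := hWrefl Λ
      have hw0 : (w : X) = 0 := by
        apply hnorming _ w.2
        intro k
        have h1 : Rc (g k) ∈ V :=
          Submodule.le_topologicalClosure _ (Submodule.subset_span ⟨k, rfl⟩)
        have h2 : Λ (Rc (g k)) = 0 := hΛ0 _ h1
        rw [hw] at h2
        simpa [hRc] using h2
      have : Λ gg = 0 := by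
        rw [hw]
        have : w = 0 := Subtype.ext hw0
        rw [this, map_zero]
      exact hΛgg this
    exact hVS hggV
  -- construct the limit functional and use reflexivity of W
  choose Lf hLf using hall
  have hLfadd : ∀ gg gg' : (W →L[ℝ] ℝ), Lf (gg + gg') = Lf gg + Lf gg' := by
    intro gg gg'
    exact tendsto_nhds_unique (hLf (gg + gg')) (by simpa using (hLf gg).add (hLf gg'))
  have hLfsmul : ∀ (t : ℝ) (gg : (W →L[ℝ] ℝ)), Lf (t • gg) = t * Lf gg := by
    intro t gg
    exact tendsto_nhds_unique (hLf (t • gg)) (by simpa using (hLf gg).const_mul t)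
  set Λlin : (W →L[ℝ] ℝ) →ₗ[ℝ] ℝ :=
    { toFun := Lf
      map_add' := hLfadd
      map_smul' := hLfsmul } with hΛlin
  have hΛbdd : ∀ gg : (W →L[ℝ] ℝ), ‖Λlin gg‖ ≤ M' * ‖gg‖ := by
    intro gg
    have h1 : Tendsto (fun n => |gg (vv n)|) atTop (𝓝 |Lf gg|) := (hLf gg).abs
    have h2 : ∀ n, |gg (vv n)| ≤ M' * ‖gg‖ := by
      intro n
      calc |gg (vv n)| ≤ ‖gg‖ * ‖vv n‖ := gg.le_opNorm _
      _ ≤ ‖gg‖ * M' := mul_le_mul_of_nonneg_left (hvvb n) (norm_nonneg (E := W →L[ℝ] ℝ) _)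
      _ = M' * ‖gg‖ := mul_comm _ _
    have := le_of_tendsto h1 (Eventually.of_forall h2)
    rw [Real.norm_eq_abs]; exact this
  obtain ⟨winf, hwinf⟩ := hWrefl (LinearMap.mkContinuous (E := W →L[ℝ] ℝ) Λlin M' hΛbdd)
  refine ⟨ψ, (winf : X), hψ, fun φ => ?_⟩
  have h1 : Lf (Rc φ) = Rc φ winf := hwinf (Rc φ)
  have h2 := hLf (Rc φ)
  rw [h1] at h2
  simpa [hRc] using h2


theorem exists_B (P : X →L[ℝ] X) (hX : SpaceHyp P) : ∃ B : X →L[ℝ] X →L[ℝ] ℝ,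
    (∀ u : X, HasFDerivAt (fun w : X => ‖P w‖ ^ 2) ((2 : ℝ) • B u) u) ∧
    (∀ u : X, B u u = ‖P u‖ ^ 2) ∧
    (∀ u w : X, P w = 0 → B u w = 0) ∧
    (∀ u w : X, P u = 0 → B u w = 0) := by
  classical
  set Kp : Submodule ℝ X := LinearMap.ker (((ContinuousLinearMap.id ℝ X - P) : X →L[ℝ] X) : X →ₗ[ℝ] X)
    with hKp
  have hmem : ∀ u : X, u ∈ Kp ↔ P u = u := by
    intro u
    rw [hKp, LinearMap.mem_ker]
    constructor
    · intro h
      have : u - P u = 0 := by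
        simpa [ContinuousLinearMap.sub_apply] using h
      have := sub_eq_zero.mp this
      exact this.symm
    · intro h
      simp [ContinuousLinearMap.sub_apply, h]
  have par : ∀ x y : ↥Kp, ‖x + y‖ * ‖x + y‖ + ‖x - y‖ * ‖x - y‖ =
      2 * (‖x‖ * ‖x‖ + ‖y‖ * ‖y‖) := by
    intro x y
    have hx : P (x : X) = x := (hmem x).mp x.2
    have hy : P (y : X) = y := (hmem y).mp y.2
    have h := hX.parallelogram x y hx hy
    have hxy : ‖x + y‖ = ‖(x : X) + y‖ := rfl
    have hxy' : ‖x - y‖ = ‖(x : X) - y‖ := rfl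
    have hxx : ‖x‖ = ‖(x : X)‖ := rfl
    have hyy : ‖y‖ = ‖(y : X)‖ := rfl
    rw [hxy, hxy', hxx, hyy]
    nlinarith [h]
  letI ip0 : InnerProductSpace ℝ ↥Kp := InnerProductSpace.ofNorm (𝕜 := ℝ) (E := ↥Kp) par
  letI ip : InnerProductSpace ℝ ↥Kp :=
    { toNormedSpace := (inferInstance : NormedSpace ℝ ↥Kp)
      inner := ip0.inner
      norm_sq_eq_re_inner := ip0.norm_sq_eq_re_inner
      conj_inner_symm := ip0.conj_inner_symm
      add_left := ip0.add_left
      smul_left := ip0.smul_left }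
  set pc : X →L[ℝ] ↥Kp := P.codRestrict Kp (fun u => (hmem (P u)).mpr (hX.idem u)) with hpc
  have hpcv : ∀ u : X, ((pc u : X)) = P u := fun u => rfl
  have hnormpc : ∀ u : X, ‖pc u‖ = ‖P u‖ := fun u => rfl
  have hBbound : ∀ u w : X, ‖⟪pc u, pc w⟫_ℝ‖ ≤ (‖P‖ * ‖P‖) * ‖u‖ * ‖w‖ := by
    intro u w
    calc ‖⟪pc u, pc w⟫_ℝ‖ ≤ ‖pc u‖ * ‖pc w‖ := by
          simpa [Real.norm_eq_abs] using abs_real_inner_le_norm (pc u) (pc w)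
    _ = ‖P u‖ * ‖P w‖ := by rw [hnormpc, hnormpc]
    _ ≤ (‖P‖ * ‖u‖) * (‖P‖ * ‖w‖) :=
        mul_le_mul (P.le_opNorm u) (P.le_opNorm w) (norm_nonneg _)
          (by positivity)
    _ = (‖P‖ * ‖P‖) * ‖u‖ * ‖w‖ := by ring
  set B : X →L[ℝ] X →L[ℝ] ℝ :=
    LinearMap.mkContinuous₂
      (LinearMap.mk₂ ℝ (fun u w : X => ⟪pc u, pc w⟫_ℝ)
        (fun u u' w => by simp only [map_add, inner_add_left])
        (fun c u w => by simp only [map_smul, real_inner_smul_left, smul_eq_mul])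
        (fun u w w' => by simp only [map_add, inner_add_right])
        (fun c u w => by simp only [map_smul, real_inner_smul_right, smul_eq_mul]))
      (‖P‖ * ‖P‖) hBbound with hB
  have hBval : ∀ u w : X, B u w = ⟪pc u, pc w⟫_ℝ := fun u w => rfl
  refine ⟨B, ?_, ?_, ?_, ?_⟩
  · intro u
    have hfun : (fun w : X => ‖P w‖ ^ 2) = fun w : X => ⟪pc w, pc w⟫_ℝ := by
      funext w
      rw [real_inner_self_eq_norm_sq, hnormpc]
    rw [hfun]
    have hpcd : HasFDerivAt (fun w : X => pc w) pc u := pc.hasFDerivAt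
    have h := (hpcd.inner ℝ hpcd)
    refine h.congr_fderiv ?_
    ext w
    simp only [ContinuousLinearMap.smul_apply, ContinuousLinearMap.comp_apply,
      ContinuousLinearMap.prod_apply, fderivInnerCLM_apply, smul_eq_mul]
    rw [hBval]
    rw [real_inner_comm (pc w) (pc u)]
    ring
  · intro u
    rw [hBval, real_inner_self_eq_norm_sq, hnormpc]
  · intro u w hw
    have hz : pc w = 0 := by
      apply Subtype.ext
      simp [hpcv, hw]
    rw [hBval, hz, inner_zero_right]
  · intro u w hu
    have hz : pc u = 0 := by
      apply Subtype.ext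
      simp [hpcv, hu]
    rw [hBval, hz, inner_zero_left]

theorem Jf_hasFDerivAt (P : X →L[ℝ] X) (I : X → ℝ) {B : X →L[ℝ] X →L[ℝ] ℝ}
    (hI : ContDiff ℝ 1 I)
    (hB : ∀ u : X, HasFDerivAt (fun w : X => ‖P w‖ ^ 2) ((2 : ℝ) • B u) u) (u : X) :
    HasFDerivAt (Jf P I) (B u - fderiv ℝ I u) u := by
  have hIu : HasFDerivAt I (fderiv ℝ I u) u :=
    (hI.differentiable one_ne_zero u).hasFDerivAt
  have h1 := ((hB u).const_mul (1 / 2 : ℝ)).sub hIu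
  have h2 : (1 / 2 : ℝ) • (2 : ℝ) • B u = B u := by
    rw [smul_smul]
    norm_num
  rw [h2] at h1
  exact h1

theorem fderiv_Jf (P : X →L[ℝ] X) (I : X → ℝ) {B : X →L[ℝ] X →L[ℝ] ℝ}
    (hI : ContDiff ℝ 1 I)
    (hB : ∀ u : X, HasFDerivAt (fun w : X => ‖P w‖ ^ 2) ((2 : ℝ) • B u) u) (u w : X) :
    fderiv ℝ (Jf P I) u w = B u w - fderiv ℝ I u w := by
  rw [(Jf_hasFDerivAt P I hI hB u).fderiv]
  rfl


section Helpers

variable {P : X →L[ℝ] X} {I : X → ℝ}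

lemma normP_le (hX : SpaceHyp P) (u : X) : ‖P u‖ ≤ ‖u‖ := by
  have h := hX.pyth u
  nlinarith [norm_nonneg (P u), norm_nonneg u, sq_nonneg (‖u - P u‖)]

lemma norm_sub_P_le (hX : SpaceHyp P) (u : X) : ‖u - P u‖ ≤ ‖u‖ := by
  have h := hX.pyth u
  nlinarith [norm_nonneg (u - P u), norm_nonneg u, sq_nonneg (‖P u‖)]

lemma P_decomp {up v : X} (hup : P up = up) (hv : P v = 0) (t : ℝ) :
    P (t • up + v) = t • up := by
  rw [map_add, map_smul, hup, hv, add_zero]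

lemma normP_decomp {up v : X} (hup : P up = up) (hup1 : ‖up‖ = 1) (hv : P v = 0) (t : ℝ) :
    ‖P (t • up + v)‖ = |t| := by
  rw [P_decomp hup hv, norm_smul, hup1, Real.norm_eq_abs, mul_one]

lemma Jf_decomp {up v : X} (hup : P up = up) (hup1 : ‖up‖ = 1) (hv : P v = 0) (t : ℝ) :
    Jf P I (t • up + v) = t ^ 2 / 2 - I (t • up + v) := by
  unfold Jf
  rw [normP_decomp hup hup1 hv, sq_abs]
  ring

lemma tendsto_index_atTop {u : ℕ → X} {σ : ℕ → ℕ}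
    (h : Tendsto (fun k => ‖u (σ k)‖) atTop atTop) : Tendsto σ atTop atTop := by
  rw [tendsto_atTop]
  intro N
  set m := ∑ j ∈ Finset.range N, ‖u j‖ with hm
  have hmj : ∀ j < N, ‖u j‖ ≤ m := fun j hj =>
    Finset.single_le_sum (fun i _ => norm_nonneg (u i)) (Finset.mem_range.mpr hj)
  filter_upwards [h.eventually_gt_atTop m] with k hk
  by_contra hσ
  push_neg at hσ
  exact absurd (hmj _ hσ) (not_le.mpr hk)

/-- Key coercivity estimate: sequences in (moving) half-spaces with `J` bounded below by a
positive constant are bounded. -/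
lemma key_bounded (hX : SpaceHyp P) (h1 : CondI1 I) (h4 : CondI4 P I) (h8 : CondI8 P I)
    (upk : ℕ → X) (up : X) (hupk : ∀ k, P (upk k) = upk k) (hupk1 : ∀ k, ‖upk k‖ = 1)
    (hupl : Tendsto upk atTop (𝓝 up)) (hup0 : up ≠ 0)
    (t : ℕ → ℝ) (v : ℕ → X) (ht : ∀ k, 0 ≤ t k) (hv : ∀ k, P (v k) = 0)
    (δ : ℝ) (hδ : 0 < δ) (hJ : ∀ k, δ ≤ Jf P I (t k • upk k + v k)) :
    ∃ C : ℝ, ∀ k, ‖t k • upk k + v k‖ ≤ C := by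
  by_contra hbdd
  push_neg at hbdd
  set u : ℕ → X := fun k => t k • upk k + v k with hu
  have hbdd' : ∀ C : ℝ, ∃ k, C < ‖u k‖ := hbdd
  choose σ hσ using hbdd'
  set σ' : ℕ → ℕ := fun k => σ (k : ℝ) with hσ'
  have hnorm : Tendsto (fun k => ‖u (σ' k)‖) atTop atTop := by
    have hle : ∀ k : ℕ, (k : ℝ) ≤ ‖u (σ' k)‖ := fun k => (hσ (k : ℝ)).le
    exact tendsto_atTop_mono hle tendsto_natCast_atTop_atTop
  have hσtop : Tendsto σ' atTop atTop := tendsto_index_atTop hnorm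
  have htI : Tendsto (fun k => ‖P (u (σ' k))‖ + I (u (σ' k))) atTop atTop :=
    h4 (u ∘ σ') hnorm
  have hPnorm : ∀ k, ‖P (u k)‖ = t k := by
    intro k
    rw [hu]
    rw [normP_decomp (hupk k) (hupk1 k) (hv k), abs_of_nonneg (ht k)]
  have htI' : Tendsto (fun k => t (σ' k) + I (u (σ' k))) atTop atTop := by
    convert htI using 2 with k
    rw [hPnorm]
  by_cases htop : Tendsto (fun k => t (σ' k)) atTop atTop
  · -- use (I8)
    set w : ℕ → X := fun k => upk (σ' k) + (t (σ' k))⁻¹ • v (σ' k) with hw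
    have hPw : ∀ k, P (w k) = upk (σ' k) := by
      intro k
      rw [hw]
      simp only [map_add, map_smul, hupk, hv, smul_zero, add_zero]
    have hPwl : Tendsto (fun k => P (w k)) atTop (𝓝 up) := by
      simp only [hPw]
      exact hupl.comp hσtop
    have h8' := h8 (fun k => t (σ' k)) w up htop hPwl hup0
    have hev : ∀ᶠ k in atTop, I (t (σ' k) • w k) / t (σ' k) ^ 2 > 1 / 2 :=
      h8'.eventually_gt_atTop _
    have hev2 : ∀ᶠ k in atTop, 0 < t (σ' k) := htop.eventually_gt_atTop 0
    rcases (hev.and hev2).exists with ⟨k, hk1, hk2⟩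
    have heq : t (σ' k) • w k = u (σ' k) := by
      rw [hw, smul_add, smul_smul, mul_inv_cancel₀ (ne_of_gt hk2), one_smul]
    rw [heq] at hk1
    have hI : t (σ' k) ^ 2 / 2 < I (u (σ' k)) := by
      have h2 : 0 < t (σ' k) ^ 2 := by positivity
      rw [gt_iff_lt, lt_div_iff₀ h2] at hk1
      nlinarith [hk1]
    have hJk : δ ≤ Jf P I (u (σ' k)) := hJ (σ' k)
    have hJeq0 : Jf P I (u (σ' k)) = t (σ' k) ^ 2 / 2 - I (u (σ' k)) :=
      Jf_decomp (hupk _) (hupk1 _) (hv _) _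
    rw [hJeq0] at hJk
    linarith
  · -- t has a bounded subsequence; then I blows up
    rw [tendsto_atTop] at htop
    push_neg at htop
    obtain ⟨b, hb⟩ := htop
    obtain ⟨φ, hφmono, hφ⟩ := Filter.extraction_of_frequently_atTop
      hb
    have htIφ : Tendsto (fun k => t (σ' (φ k)) + I (u (σ' (φ k)))) atTop atTop :=
      htI'.comp hφmono.tendsto_atTop
    have hIφ : Tendsto (fun k => I (u (σ' (φ k)))) atTop atTop := by
      have h1' : Tendsto (fun k => t (σ' (φ k)) + I (u (σ' (φ k))) + -b) atTop atTop :=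
        tendsto_atTop_add_const_right atTop (-b) htIφ
      have hle : ∀ k, t (σ' (φ k)) + I (u (σ' (φ k))) + -b ≤ I (u (σ' (φ k))) := by
        intro k
        have := hφ k
        linarith
      exact tendsto_atTop_mono hle h1'
    obtain ⟨k, hk⟩ := (hIφ.eventually_gt_atTop (b ^ 2 / 2)).exists
    have htb : t (σ' (φ k)) < b := hφ k
    have htb0 : 0 ≤ t (σ' (φ k)) := ht _
    have hJk : δ ≤ Jf P I (u (σ' (φ k))) := hJ (σ' (φ k))
    have hJeq : Jf P I (u (σ' (φ k))) = t (σ' (φ k)) ^ 2 / 2 - I (u (σ' (φ k))) :=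
      Jf_decomp (hupk _) (hupk1 _) (hv _) _
    rw [hJeq] at hJk
    nlinarith [hk, htb, htb0, hδ]

lemma J_r_up_ge {r a : ℝ} (h6 : CondI6 P I r a) {up : X} (hup : P up = up)
    (hup1 : ‖up‖ = 1) : a ≤ Jf P I (r • up) := by
  obtain ⟨hr, ha, hapos⟩ := h6
  have hbdd : BddBelow (Jf P I '' {u : X | P u = u ∧ ‖u‖ = r}) := by
    by_contra h
    rw [csInf_of_not_bddBelow h, Real.sInf_empty] at ha
    exact absurd ha (by linarith)
  have hmem : r • up ∈ {u : X | P u = u ∧ ‖u‖ = r} := by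
    constructor
    · rw [map_smul, hup]
    · rw [norm_smul, hup1, mul_one, Real.norm_eq_abs, abs_of_pos hr]
  rw [ha]
  exact csInf_le hbdd ⟨r • up, hmem, rfl⟩

lemma extract_subseq (hX : SpaceHyp P)
    (t : ℕ → ℝ) (v : ℕ → X) (upk : ℕ → X) (up : X)
    (ht0 : ∀ k, 0 ≤ t k) (hv : ∀ k, P (v k) = 0)
    (hupk : ∀ k, P (upk k) = upk k) (hupk1 : ∀ k, ‖upk k‖ = 1)
    (hupl : Tendsto upk atTop (𝓝 up))
    (C : ℝ) (hC : ∀ k, ‖t k • upk k + v k‖ ≤ C) :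
    ∃ (σ : ℕ → ℕ) (tl : ℝ) (vt : X), StrictMono σ ∧ 0 ≤ tl ∧ P vt = 0 ∧
      Tendsto (fun k => t (σ k)) atTop (𝓝 tl) ∧
      TConv P (fun k => t (σ k) • upk (σ k) + v (σ k)) (tl • up + vt) := by
  set u : ℕ → X := fun k => t k • upk k + v k with hu
  have hPu : ∀ k, P (u k) = t k • upk k := fun k => P_decomp (hupk k) (hv k) (t k)
  have htb : ∀ k, t k ∈ Icc (0 : ℝ) C := by
    intro k
    refine ⟨ht0 k, ?_⟩
    have h1 : ‖P (u k)‖ = t k := by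
      rw [hPu k, norm_smul, hupk1 k, mul_one, Real.norm_eq_abs, abs_of_nonneg (ht0 k)]
    rw [← h1]
    exact (normP_le hX (u k)).trans (hC k)
  obtain ⟨tl, htlmem, σ₁, hσ₁, htl⟩ := (isCompact_Icc (a := (0:ℝ)) (b := C)).tendsto_subseq htb
  have hvb : ∀ k, ‖v k‖ ≤ C := by
    intro k
    have h1 : v k = u k - P (u k) := by
      rw [hPu k]
      show v k = t k • upk k + v k - t k • upk k
      abel
    rw [h1]
    exact (norm_sub_P_le hX (u k)).trans (hC k)
  obtain ⟨σ₂, vt, hσ₂, hweak⟩ :=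
    exists_weak_subseq hX.reflexive (fun k => v (σ₁ k)) C (fun k => hvb (σ₁ k))
  have hPvt : P vt = 0 := by
    apply eq_zero_of_forall_dual_eq_zero
    intro φ
    have h0 := hweak (φ.comp P)
    simp only [ContinuousLinearMap.comp_apply, hv, map_zero] at h0
    exact (tendsto_nhds_unique tendsto_const_nhds h0).symm
  have hPup : P up = up := by
    have h1 : Tendsto (fun k => P (upk k)) atTop (𝓝 (P up)) :=
      (P.continuous.tendsto up).comp hupl
    simp only [hupk] at h1
    exact (tendsto_nhds_unique hupl h1).symm
  refine ⟨σ₁ ∘ σ₂, tl, vt, hσ₁.comp hσ₂, htlmem.1, hPvt, ?_, ?_, ?_⟩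
  · exact htl.comp hσ₂.tendsto_atTop
  · -- norm convergence of the P-components
    have h2 : P (tl • up + vt) = tl • up := P_decomp hPup hPvt tl
    rw [h2]
    have h3 : ∀ k, P (u ((σ₁ ∘ σ₂) k)) = t ((σ₁ ∘ σ₂) k) • upk ((σ₁ ∘ σ₂) k) :=
      fun k => hPu _
    have h4 : Tendsto (fun k => t ((σ₁ ∘ σ₂) k) • upk ((σ₁ ∘ σ₂) k)) atTop (𝓝 (tl • up)) :=
      Tendsto.smul (htl.comp hσ₂.tendsto_atTop) (hupl.comp (hσ₁.comp hσ₂).tendsto_atTop)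
    exact h4.congr fun k => (h3 k).symm
  · intro φ
    have h2 : tl • up + vt - P (tl • up + vt) = vt := by
      rw [P_decomp hPup hPvt tl]
      abel
    rw [h2]
    have h3 : ∀ k, u ((σ₁ ∘ σ₂) k) - P (u ((σ₁ ∘ σ₂) k)) = v ((σ₁ ∘ σ₂) k) := by
      intro k
      rw [hPu]
      show t _ • upk _ + v _ - t _ • upk _ = v _
      abel
    have h4 := hweak φ
    refine h4.congr fun k => ?_
    rw [h3 k]
    rfl

lemma nstrict (h1 : CondI1 I) {B : X →L[ℝ] X →L[ℝ] ℝ}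
    (hB : ∀ u : X, HasFDerivAt (fun w : X => ‖P w‖ ^ 2) ((2 : ℝ) • B u) u)
    (hBself : ∀ u : X, B u u = ‖P u‖ ^ 2)
    (hBr : ∀ u w : X, P w = 0 → B u w = 0)
    (h9 : CondI9 P I) {u : X} (hu : u ∈ Nset P I) :
    ∀ t : ℝ, 0 ≤ t → ∀ v : X, P v = 0 → t • u + v ≠ u →
      Jf P I (t • u + v) < Jf P I u := by
  intro t ht v hv hne
  obtain ⟨hPu, hJu, hJv⟩ := hu
  have e1 : fderiv ℝ I u u = ‖P u‖ ^ 2 := by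
    have h := fderiv_Jf P I h1.1 hB u u
    rw [hJu] at h
    rw [← hBself u]
    linarith
  have e2 : fderiv ℝ I u v = 0 := by
    have h := fderiv_Jf P I h1.1 hB u v
    rw [hJv v hv, hBr u v hv] at h
    linarith
  have h9' := h9 u ⟨hPu, hJu, hJv⟩ t ht v hv (fun h => hne h.symm)
  rw [e1, e2] at h9'
  have hnorm : ‖P (t • u + v)‖ ^ 2 = t ^ 2 * ‖P u‖ ^ 2 := by
    rw [map_add, map_smul, hv, add_zero, norm_smul, Real.norm_eq_abs, mul_pow, sq_abs]
  unfold Jf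
  rw [hnorm]
  nlinarith [h9']


lemma maxex (hX : SpaceHyp P) (h1 : CondI1 I) (h2 : CondI2 P I) (h4 : CondI4 P I)
    {r a : ℝ} (h6 : CondI6 P I r a) (h8 : CondI8 P I) (h9 : CondI9 P I)
    {B : X →L[ℝ] X →L[ℝ] ℝ}
    (hB : ∀ u : X, HasFDerivAt (fun w : X => ‖P w‖ ^ 2) ((2 : ℝ) • B u) u)
    (hBself : ∀ u : X, B u u = ‖P u‖ ^ 2)
    (hBr : ∀ u w : X, P w = 0 → B u w = 0)
    {up : X} (hup : P up = up) (hup1 : ‖up‖ = 1) :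
    ∃ t1 : ℝ, ∃ v1 : X, 0 < t1 ∧ P v1 = 0 ∧
      (∀ (s : ℝ) (w : X), P w = 0 →
        fderiv ℝ (Jf P I) (t1 • up + v1) (s • up + w) = 0) ∧
      (∀ (t : ℝ) (v : X), 0 ≤ t → P v = 0 → t • up + v ≠ t1 • up + v1 →
        Jf P I (t • up + v) < Jf P I (t1 • up + v1)) := by
  classical
  have hup0 : up ≠ 0 := by
    intro h
    rw [h, norm_zero] at hup1
    exact one_ne_zero hup1.symm
  have hrpos : 0 < r := h6.1
  have hapos : 0 < a := h6.2.2
  set SJ : Set ℝ := Jf P I '' {u : X | ∃ t : ℝ, ∃ v : X, 0 ≤ t ∧ P v = 0 ∧ u = t • up + v}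
    with hSJ
  have haJ : a ≤ Jf P I (r • up) := J_r_up_ge h6 hup hup1
  have hmemr : Jf P I (r • up) ∈ SJ :=
    ⟨r • up, ⟨r, 0, hrpos.le, map_zero P, (add_zero _).symm⟩, rfl⟩
  have hneSJ : SJ.Nonempty := ⟨_, hmemr⟩
  have htk_le : ∀ (tk : ℝ) (vk : X) (C : ℝ), 0 ≤ tk → P vk = 0 →
      ‖tk • up + vk‖ ≤ C → tk ≤ C := by
    intro tk vk C htk hvk hn
    have h1' : ‖P (tk • up + vk)‖ = tk := by
      rw [normP_decomp hup hup1 hvk, abs_of_nonneg htk]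
    rw [← h1']
    exact (normP_le hX _).trans hn
  have hbddJ : BddAbove SJ := by
    by_contra hba
    rw [not_bddAbove_iff] at hba
    have hex : ∀ k : ℕ, ∃ z ∈ SJ, (k : ℝ) + 1 < z := fun k => hba ((k : ℝ) + 1)
    choose z hzSJ hzk using hex
    have hunp : ∀ k, ∃ t : ℝ, ∃ v : X, 0 ≤ t ∧ P v = 0 ∧ z k = Jf P I (t • up + v) := by
      intro k
      obtain ⟨u', ⟨t, v, ht, hv, rfl⟩, hJ⟩ := hzSJ k
      exact ⟨t, v, ht, hv, hJ.symm⟩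
    choose tk vk htk hvk hzeq using hunp
    have hJge : ∀ k, (1 : ℝ) ≤ Jf P I (tk k • up + vk k) := by
      intro k
      have h1' := hzk k
      rw [hzeq k] at h1'
      have : (0 : ℝ) ≤ (k : ℝ) := Nat.cast_nonneg k
      linarith
    obtain ⟨C, hC⟩ := key_bounded hX h1 h4 h8 (fun _ => up) up (fun _ => hup)
      (fun _ => hup1) tendsto_const_nhds hup0 tk vk htk hvk 1 one_pos hJge
    have htkC : ∀ k, tk k ≤ C := fun k => htk_le _ _ _ (htk k) (hvk k) (hC k)
    have hC0 : 0 ≤ C := le_trans (norm_nonneg _) (hC 0)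
    set k0 : ℕ := ⌈C ^ 2 / 2⌉₊ with hk0
    have h1' := hzk k0
    rw [hzeq k0] at h1'
    have h2' : Jf P I (tk k0 • up + vk k0) ≤ C ^ 2 / 2 := by
      rw [Jf_decomp hup hup1 (hvk k0)]
      have h3' : tk k0 ^ 2 ≤ C ^ 2 := by nlinarith [htk k0, htkC k0]
      have := h1.2.2 (tk k0 • up + vk k0)
      linarith
    have h4' : C ^ 2 / 2 ≤ (k0 : ℝ) := Nat.le_ceil _
    linarith
  set m := sSup SJ with hm
  have ham : a ≤ m := haJ.trans (le_csSup hbddJ hmemr)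
  have hm0 : 0 < m := lt_of_lt_of_le hapos ham
  -- a maximizing sequence
  have hseq : ∀ k : ℕ, ∃ z ∈ SJ, max (m - 1 / (k + 1)) (m / 2) < z := by
    intro k
    apply exists_lt_of_lt_csSup hneSJ
    apply max_lt
    · have : (0 : ℝ) < 1 / ((k : ℝ) + 1) := by positivity
      linarith
    · linarith
  choose z hzSJ hzk using hseq
  have hunp : ∀ k, ∃ t : ℝ, ∃ v : X, 0 ≤ t ∧ P v = 0 ∧ z k = Jf P I (t • up + v) := by
    intro k
    obtain ⟨u', ⟨t, v, ht, hv, rfl⟩, hJ⟩ := hzSJ k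
    exact ⟨t, v, ht, hv, hJ.symm⟩
  choose tk vk htk hvk hzeq using hunp
  have hJup : ∀ k, Jf P I (tk k • up + vk k) ≤ m := fun k =>
    le_csSup hbddJ ⟨_, ⟨tk k, vk k, htk k, hvk k, rfl⟩, rfl⟩
  have hJlo : ∀ k : ℕ, m - 1 / ((k : ℝ) + 1) ≤ Jf P I (tk k • up + vk k) := by
    intro k
    have h1' := hzk k
    rw [hzeq k] at h1'
    exact (le_max_left _ _).trans h1'.le
  have hJhalf : ∀ k, m / 2 ≤ Jf P I (tk k • up + vk k) := by
    intro k
    have h1' := hzk k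
    rw [hzeq k] at h1'
    exact (le_max_right _ _).trans h1'.le
  have hJtend : Tendsto (fun k => Jf P I (tk k • up + vk k)) atTop (𝓝 m) := by
    have hlow : Tendsto (fun k : ℕ => m - 1 / ((k : ℝ) + 1)) atTop (𝓝 m) := by
      have h0 := tendsto_one_div_add_atTop_nhds_zero_nat (𝕜 := ℝ)
      have h2' := (tendsto_const_nhds : Tendsto (fun _ : ℕ => m) atTop (𝓝 m)).sub h0
      simpa using h2'
    exact tendsto_of_tendsto_of_tendsto_of_le_of_le hlow tendsto_const_nhds hJlo hJup
  obtain ⟨C, hC⟩ := key_bounded hX h1 h4 h8 (fun _ => up) up (fun _ => hup)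
    (fun _ => hup1) tendsto_const_nhds hup0 tk vk htk hvk (m / 2) (by linarith) hJhalf
  obtain ⟨σ, tl, vt, hσ, htl0, hPvt, htlc, hTC⟩ := extract_subseq hX tk vk (fun _ => up) up
    htk hvk (fun _ => hup) (fun _ => hup1) tendsto_const_nhds C hC
  set l : X := tl • up + vt with hl
  have hIconv : Tendsto (fun k => I (tk (σ k) • up + vk (σ k))) atTop
      (𝓝 (tl ^ 2 / 2 - m)) := by
    have hfe : ∀ k, (tk (σ k)) ^ 2 / 2 - Jf P I (tk (σ k) • up + vk (σ k)) =
        I (tk (σ k) • up + vk (σ k)) := by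
      intro k
      have := Jf_decomp (I := I) hup hup1 (hvk (σ k)) (tk (σ k))
      linarith
    have h2' : Tendsto (fun k => (tk (σ k)) ^ 2 / 2 -
        Jf P I (tk (σ k) • up + vk (σ k))) atTop (𝓝 (tl ^ 2 / 2 - m)) :=
      (((htlc.pow 2).div_const 2).sub (hJtend.comp hσ.tendsto_atTop))
    exact h2'.congr hfe
  have hIl : I l ≤ tl ^ 2 / 2 - m := by
    have h2' := h2 (fun k => tk (σ k) • up + vk (σ k)) l hTC
    rwa [hIconv.liminf_eq] at h2'
  have hJl_ge : m ≤ Jf P I l := by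
    have heq : Jf P I l = tl ^ 2 / 2 - I l := Jf_decomp hup hup1 hPvt tl
    linarith
  have hJl_mem : Jf P I l ∈ SJ := ⟨l, ⟨tl, vt, htl0, hPvt, rfl⟩, rfl⟩
  have hJl : Jf P I l = m := le_antisymm (le_csSup hbddJ hJl_mem) hJl_ge
  have htlpos : 0 < tl := by
    rcases eq_or_lt_of_le htl0 with h | h
    · exfalso
      have heq : Jf P I l = tl ^ 2 / 2 - I l := Jf_decomp hup hup1 hPvt tl
      have := h1.2.2 l
      rw [hJl] at heq
      rw [← h] at heq
      norm_num at heq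
      linarith
    · exact h
  -- criticality of the maximum point
  have hcrit : ∀ (s : ℝ) (w : X), P w = 0 → fderiv ℝ (Jf P I) l (s • up + w) = 0 := by
    intro s w hw
    set d : X := s • up + w with hd
    have hgd : HasDerivAt (fun ε : ℝ => Jf P I (l + ε • d)) (fderiv ℝ (Jf P I) l d) 0 := by
      have hcurve : HasDerivAt (fun ε : ℝ => l + ε • d) d 0 := by
        simpa using ((hasDerivAt_id (0 : ℝ)).smul_const d).const_add l
      have hJd : HasFDerivAt (Jf P I) (B l - fderiv ℝ I l) l :=
        Jf_hasFDerivAt P I h1.1 hB l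
      have hJd' : HasFDerivAt (Jf P I) (B l - fderiv ℝ I l) ((fun ε : ℝ => l + ε • d) 0) := by
        simpa using hJd
      have hcomp := hJd'.comp_hasDerivAt 0 hcurve
      have hfd : fderiv ℝ (Jf P I) l d = (B l - fderiv ℝ I l) d := by
        rw [(Jf_hasFDerivAt P I h1.1 hB l).fderiv]
      rw [hfd]
      exact hcomp
    have hloc : IsLocalMax (fun ε : ℝ => Jf P I (l + ε • d)) 0 := by
      have hδpos : 0 < tl / (1 + |s|) := by positivity
      have habs : 0 ≤ |s| := abs_nonneg s
      filter_upwards [Metric.ball_mem_nhds (0 : ℝ) hδpos] with ε hε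
      rw [Metric.mem_ball, Real.dist_eq, sub_zero] at hε
      have hεs : -tl < ε * s := by
        have h1' : |ε * s| ≤ |ε| * (1 + |s|) := by
          rw [abs_mul]
          have := abs_nonneg ε
          nlinarith
        have h2' : |ε| * (1 + |s|) < tl := by
          rw [lt_div_iff₀ (by positivity)] at hε
          linarith
        have := neg_abs_le (ε * s)
        linarith
      have hdecomp : l + ε • d = (tl + ε * s) • up + (vt + ε • w) := by
        rw [hl, hd]
        module
      have hmem2 : Jf P I (l + ε • d) ∈ SJ := by
        refine ⟨l + ε • d, ⟨tl + ε * s, vt + ε • w, by linarith, ?_, hdecomp⟩, rfl⟩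
        rw [map_add, map_smul, hPvt, hw, smul_zero, add_zero]
      show Jf P I (l + ε • d) ≤ Jf P I (l + (0 : ℝ) • d)
      rw [zero_smul, add_zero, hJl]
      exact le_csSup hbddJ hmem2
    exact hloc.hasDerivAt_eq_zero hgd
  have hPl : P l = tl • up := P_decomp hup hPvt tl
  have hNl : l ∈ Nset P I := by
    refine ⟨?_, ?_, ?_⟩
    · rw [hPl]
      exact smul_ne_zero (ne_of_gt htlpos) hup0
    · exact hcrit tl vt hPvt
    · intro v' hv'
      have h1' := hcrit 0 v' hv'
      rwa [zero_smul, zero_add] at h1'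
  refine ⟨tl, vt, htlpos, hPvt, hcrit, ?_⟩
  intro t v ht hv hne2
  have hs0 : 0 ≤ t / tl := div_nonneg ht htl0
  have hPw' : P (v - (t / tl) • vt) = 0 := by
    rw [map_sub, map_smul, hv, hPvt, smul_zero, sub_zero]
  have hrepr : (t / tl) • l + (v - (t / tl) • vt) = t • up + v := by
    rw [hl]
    rw [smul_add, smul_smul, div_mul_cancel₀ _ (ne_of_gt htlpos)]
    abel
  have hne3 : (t / tl) • l + (v - (t / tl) • vt) ≠ l := by
    rw [hrepr]
    exact hne2
  have key := nstrict h1 hB hBself hBr h9 hNl (t / tl) hs0 (v - (t / tl) • vt) hPw' hne3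
  rwa [hrepr] at key

/-- Any critical point on the positive half-space line coincides with the strict maximum. -/
lemma unique_crit (hX : SpaceHyp P) (h1 : CondI1 I) (h9 : CondI9 P I)
    {B : X →L[ℝ] X →L[ℝ] ℝ}
    (hB : ∀ u : X, HasFDerivAt (fun w : X => ‖P w‖ ^ 2) ((2 : ℝ) • B u) u)
    (hBself : ∀ u : X, B u u = ‖P u‖ ^ 2)
    (hBr : ∀ u w : X, P w = 0 → B u w = 0)
    {up : X} (hup : P up = up) (hup1 : ‖up‖ = 1)
    {t1 : ℝ} {v1 : X} (ht1 : 0 < t1) (hv1 : P v1 = 0)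
    (hstrict1 : ∀ (t : ℝ) (v : X), 0 ≤ t → P v = 0 → t • up + v ≠ t1 • up + v1 →
      Jf P I (t • up + v) < Jf P I (t1 • up + v1))
    {t : ℝ} {v : X} (ht : 0 < t) (hv : P v = 0)
    (hcrit : ∀ (s : ℝ) (w : X), P w = 0 →
      fderiv ℝ (Jf P I) (t • up + v) (s • up + w) = 0) :
    t • up + v = t1 • up + v1 := by
  have hup0 : up ≠ 0 := by
    intro h
    rw [h, norm_zero] at hup1
    exact one_ne_zero hup1.symm
  set u : X := t • up + v with hu
  have huN : u ∈ Nset P I := by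
    refine ⟨?_, ?_, ?_⟩
    · rw [P_decomp hup hv]
      exact smul_ne_zero (ne_of_gt ht) hup0
    · exact hcrit t v hv
    · intro w hw
      have h' := hcrit 0 w hw
      rwa [zero_smul, zero_add] at h'
  by_contra hne
  have h1' : Jf P I u < Jf P I (t1 • up + v1) := hstrict1 t v ht.le hv hne
  -- reparametrize `t1 • up + v1` on the half-space of `u`
  have hs0 : 0 ≤ t1 / t := div_nonneg ht1.le ht.le
  have hPw' : P (v1 - (t1 / t) • v) = 0 := by
    rw [map_sub, map_smul, hv1, hv, smul_zero, sub_zero]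
  have hrepr : (t1 / t) • u + (v1 - (t1 / t) • v) = t1 • up + v1 := by
    rw [hu, smul_add, smul_smul, div_mul_cancel₀ _ (ne_of_gt ht)]
    abel
  have hne3 : (t1 / t) • u + (v1 - (t1 / t) • v) ≠ u := by
    rw [hrepr]
    exact fun h => hne h.symm
  have h2' := nstrict h1 hB hBself hBr h9 huN (t1 / t) hs0 (v1 - (t1 / t) • v) hPw' hne3
  rw [hrepr] at h2'
  linarith

/-- Sequential continuity of the maximizer map. -/
lemma cont_seq (hX : SpaceHyp P) (h1 : CondI1 I) (h2 : CondI2 P I) (h3 : CondI3 P I)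
    (h4 : CondI4 P I) {r a : ℝ} (h6 : CondI6 P I r a) (h8 : CondI8 P I)
    {B : X →L[ℝ] X →L[ℝ] ℝ}
    (hB : ∀ u : X, HasFDerivAt (fun w : X => ‖P w‖ ^ 2) ((2 : ℝ) • B u) u)
    (tf : X → ℝ) (vf : X → X)
    (hprops : ∀ up : X, P up = up → ‖up‖ = 1 → 0 < tf up ∧ P (vf up) = 0 ∧
      (∀ (t : ℝ) (v : X), 0 ≤ t → P v = 0 → t • up + v ≠ tf up • up + vf up →
        Jf P I (t • up + v) < Jf P I (tf up • up + vf up)))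
    (upk : ℕ → X) (up : X) (hk : ∀ k, P (upk k) = upk k) (hk1 : ∀ k, ‖upk k‖ = 1)
    (hul : Tendsto upk atTop (𝓝 up)) (hup : P up = up) (hup1 : ‖up‖ = 1) :
    Tendsto (fun k => tf (upk k) • upk k + vf (upk k)) atTop
      (𝓝 (tf up • up + vf up)) := by
  classical
  have hup0 : up ≠ 0 := by
    intro h
    rw [h, norm_zero] at hup1
    exact one_ne_zero hup1.symm
  have hapos : 0 < a := h6.2.2
  have hJcont : Continuous (Jf P I) := by
    rw [continuous_iff_continuousAt]
    intro x
    exact (Jf_hasFDerivAt P I h1.1 hB x).differentiableAt.continuousAt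
  -- `J` at the maximizer is at least `a`, for any point of the sphere
  have hJa : ∀ x : X, P x = x → ‖x‖ = 1 → a ≤ Jf P I (tf x • x + vf x) := by
    intro x hx hx1
    obtain ⟨htf, hvf, hst⟩ := hprops x hx hx1
    have haJ : a ≤ Jf P I (r • x) := J_r_up_ge h6 hx hx1
    by_cases hcase : r • x = tf x • x + vf x
    · rw [← hcase]
      exact haJ
    · have : r • x = r • x + 0 := by rw [add_zero]
      have h' := hst r 0 h6.1.le (map_zero P) (by rwa [add_zero])
      rw [add_zero] at h'
      linarith
  apply tendsto_of_subseq_tendsto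
  intro ns hns
  set uq : ℕ → X := fun k => upk (ns k) with huq
  have huqP : ∀ k, P (uq k) = uq k := fun k => hk (ns k)
  have huq1 : ∀ k, ‖uq k‖ = 1 := fun k => hk1 (ns k)
  have huql : Tendsto uq atTop (𝓝 up) := hul.comp hns
  set t : ℕ → ℝ := fun k => tf (uq k) with htdef
  set v : ℕ → X := fun k => vf (uq k) with hvdef
  have ht0 : ∀ k, 0 ≤ t k := fun k => (hprops _ (huqP k) (huq1 k)).1.le
  have hv0 : ∀ k, P (v k) = 0 := fun k => (hprops _ (huqP k) (huq1 k)).2.1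
  have hJk : ∀ k, a ≤ Jf P I (t k • uq k + v k) := fun k => hJa _ (huqP k) (huq1 k)
  obtain ⟨C, hC⟩ := key_bounded hX h1 h4 h8 uq up huqP huq1 huql hup0 t v ht0 hv0 a hapos hJk
  obtain ⟨σ, tl, vt, hσ, htl0, hPvt, htlc, hTC⟩ :=
    extract_subseq hX t v uq up ht0 hv0 huqP huq1 huql C hC
  -- J-values are bounded; pass to a further subsequence on which they converge
  have htkC : ∀ k, t k ≤ C := by
    intro k
    have h1' : ‖P (t k • uq k + v k)‖ = t k := by
      rw [normP_decomp (huqP k) (huq1 k) (hv0 k), abs_of_nonneg (ht0 k)]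
    rw [← h1']
    exact (normP_le hX _).trans (hC k)
  have hJub : ∀ k, Jf P I (t k • uq k + v k) ≤ C ^ 2 / 2 := by
    intro k
    rw [Jf_decomp (huqP k) (huq1 k) (hv0 k)]
    have := h1.2.2 (t k • uq k + v k)
    nlinarith [ht0 k, htkC k]
  have hJmem : ∀ k, Jf P I (t (σ k) • uq (σ k) + v (σ k)) ∈ Icc a (C ^ 2 / 2) :=
    fun k => ⟨hJk (σ k), hJub (σ k)⟩
  obtain ⟨Jlim, hJmemlim, ρ, hρ, hJconv⟩ :=
    (isCompact_Icc (a := a) (b := C ^ 2 / 2)).tendsto_subseq hJmem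
  set τ : ℕ → ℕ := σ ∘ ρ with hτ
  have hτmono : StrictMono τ := hσ.comp hρ
  set l : X := tl • up + vt with hl
  have hTC2 : TConv P (fun k => t (τ k) • uq (τ k) + v (τ k)) l := by
    obtain ⟨hTCa, hTCb⟩ := hTC
    constructor
    · exact hTCa.comp hρ.tendsto_atTop
    · intro φ
      exact (hTCb φ).comp hρ.tendsto_atTop
  have htlc2 : Tendsto (fun k => t (τ k)) atTop (𝓝 tl) := htlc.comp hρ.tendsto_atTop
  have hIconv : Tendsto (fun k => I (t (τ k) • uq (τ k) + v (τ k))) atTop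
      (𝓝 (tl ^ 2 / 2 - Jlim)) := by
    have hfe : ∀ k, (t (τ k)) ^ 2 / 2 - Jf P I (t (τ k) • uq (τ k) + v (τ k)) =
        I (t (τ k) • uq (τ k) + v (τ k)) := by
      intro k
      have := Jf_decomp (I := I) (huqP (τ k)) (huq1 (τ k)) (hv0 (τ k)) (t (τ k))
      linarith
    exact ((((htlc2.pow 2).div_const 2).sub hJconv).congr hfe)
  have hIl : I l ≤ tl ^ 2 / 2 - Jlim := by
    have h2' := h2 (fun k => t (τ k) • uq (τ k) + v (τ k)) l hTC2
    rwa [hIconv.liminf_eq] at h2'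
  have hJl_ge : Jlim ≤ Jf P I l := by
    have heq : Jf P I l = tl ^ 2 / 2 - I l := Jf_decomp hup hup1 hPvt tl
    linarith
  obtain ⟨htfup, hvfup, hstup⟩ := hprops up hup hup1
  set m : ℝ := Jf P I (tf up • up + vf up) with hmdef
  have hJl_le : Jf P I l ≤ m := by
    by_cases hcase : l = tf up • up + vf up
    · rw [hcase]
    · exact (hstup tl vt htl0 hPvt (by rwa [← hl])).le
  -- lower bound: `m ≤ Jlim`
  have hlow_le : ∀ k, Jf P I (tf up • uq (τ k) + vf up) ≤
      Jf P I (t (τ k) • uq (τ k) + v (τ k)) := by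
    intro k
    obtain ⟨h1'', h2'', h3''⟩ := hprops _ (huqP (τ k)) (huq1 (τ k))
    by_cases hcase : tf up • uq (τ k) + vf up = t (τ k) • uq (τ k) + v (τ k)
    · rw [hcase]
    · exact (h3'' (tf up) (vf up) htfup.le hvfup hcase).le
  have hlow_tend : Tendsto (fun k => Jf P I (tf up • uq (τ k) + vf up)) atTop (𝓝 m) := by
    have harg : Tendsto (fun k => tf up • uq (τ k) + vf up) atTop
        (𝓝 (tf up • up + vf up)) := by
      have := (huql.comp hτmono.tendsto_atTop).const_smul (tf up)
      exact this.add_const (vf up)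
    exact (hJcont.tendsto _).comp harg
  have hm_le : m ≤ Jlim := le_of_tendsto_of_tendsto' hlow_tend hJconv hlow_le
  have hJleq : Jf P I l = m := le_antisymm hJl_le (hm_le.trans hJl_ge)
  have hJlimeq : Jlim = m := le_antisymm (hJl_ge.trans_eq hJleq) hm_le
  -- identify the limit with the maximizer at `up`
  have hleq : l = tf up • up + vf up := by
    by_contra hcase
    have h5' : Jf P I l < m := hstup tl vt htl0 hPvt (by rwa [← hl])
    linarith [hJleq]
  -- upgrade to norm convergence via (I3)
  have hIconv2 : Tendsto (fun k => I (t (τ k) • uq (τ k) + v (τ k))) atTop (𝓝 (I l)) := by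
    have hIleq : I l = tl ^ 2 / 2 - Jlim := by
      have heq : Jf P I l = tl ^ 2 / 2 - I l := Jf_decomp hup hup1 hPvt tl
      rw [hJleq, ← hJlimeq] at heq
      linarith
    rwa [← hIleq] at hIconv
  have hnorm := h3 (fun k => t (τ k) • uq (τ k) + v (τ k)) l hTC2 hIconv2
  refine ⟨τ, ?_⟩
  rw [← hleq]
  exact hnorm

lemma J_max_ge_a {r a : ℝ} (h6 : CondI6 P I r a) {up : X} (hup : P up = up)
    (hup1 : ‖up‖ = 1) {t1 : ℝ} {v1 : X}
    (hstrict : ∀ (t : ℝ) (v : X), 0 ≤ t → P v = 0 → t • up + v ≠ t1 • up + v1 →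
      Jf P I (t • up + v) < Jf P I (t1 • up + v1)) :
    a ≤ Jf P I (t1 • up + v1) := by
  have haJ : a ≤ Jf P I (r • up) := J_r_up_ge h6 hup hup1
  by_cases hcase : r • up + 0 = t1 • up + v1
  · rw [← hcase, add_zero]
    exact haJ
  · have h' := hstrict r 0 h6.1.le (map_zero P) hcase
    rw [add_zero] at h'
    linarith

end Helpers


/-- cf. Proposition 4.4.
Under (I1)–(I4), (I6), (I8), (I9): for every `u⁺` in the unit sphere of `X⁺`, the
functional `J` restricted to `ℝu⁺ + X̃` has exactly two critical points with positive
energy, `n₁(u⁺) = t₁u⁺ + v₁` and `n₂(u⁺) = t₂u⁺ + v₂` with `t₁ > 0 > t₂`,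
`v₁, v₂ ∈ X̃`; `n₁(u⁺)` (resp. `n₂(u⁺)`) is the unique global maximum of `J` on the half
space `ℝ⁺u⁺ + X̃` (resp. `ℝ⁻u⁺ + X̃`); they depend continuously on `u⁺`; and
`N = n₁(SX⁺)`. -/
theorem statement6 (P : X →L[ℝ] X) (I : X → ℝ) (hX : SpaceHyp P)
    (h1 : CondI1 I) (h2 : CondI2 P I) (h3 : CondI3 P I) (h4 : CondI4 P I)
    (r a : ℝ) (h6 : CondI6 P I r a) (h8 : CondI8 P I) (h9 : CondI9 P I) :
    ∃ n₁ n₂ : X → X,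
      ContinuousOn n₁ {up : X | P up = up ∧ ‖up‖ = 1} ∧
      ContinuousOn n₂ {up : X | P up = up ∧ ‖up‖ = 1} ∧
      (∀ up : X, P up = up → ‖up‖ = 1 →
        (∃ t₁ t₂ : ℝ, ∃ v₁ v₂ : X, 0 < t₁ ∧ t₂ < 0 ∧ P v₁ = 0 ∧ P v₂ = 0 ∧
          n₁ up = t₁ • up + v₁ ∧ n₂ up = t₂ • up + v₂) ∧
        n₁ up ≠ n₂ up ∧
        {u : X | (∃ t : ℝ, ∃ v : X, P v = 0 ∧ u = t • up + v) ∧ 0 < Jf P I u ∧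
            ∀ (s : ℝ) (w : X), P w = 0 → fderiv ℝ (Jf P I) u (s • up + w) = 0}
          = {n₁ up, n₂ up} ∧
        (∀ (t : ℝ) (v : X), 0 ≤ t → P v = 0 → t • up + v ≠ n₁ up →
          Jf P I (t • up + v) < Jf P I (n₁ up)) ∧
        (∀ (t : ℝ) (v : X), t ≤ 0 → P v = 0 → t • up + v ≠ n₂ up →
          Jf P I (t • up + v) < Jf P I (n₂ up))) ∧
      Nset P I = n₁ '' {up : X | P up = up ∧ ‖up‖ = 1} := by
  classical
  obtain ⟨B, hB, hBself, hBr, hBl⟩ := exists_B P hX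
  -- the maximizer, via choice
  have hex : ∀ up : X, ∃ t1 : ℝ, ∃ v1 : X, (P up = up ∧ ‖up‖ = 1) →
      0 < t1 ∧ P v1 = 0 ∧
        (∀ (s : ℝ) (w : X), P w = 0 →
          fderiv ℝ (Jf P I) (t1 • up + v1) (s • up + w) = 0) ∧
        (∀ (t : ℝ) (v : X), 0 ≤ t → P v = 0 → t • up + v ≠ t1 • up + v1 →
          Jf P I (t • up + v) < Jf P I (t1 • up + v1)) := by
    intro up
    by_cases h : P up = up ∧ ‖up‖ = 1
    · obtain ⟨t1, v1, hprop⟩ := maxex hX h1 h2 h4 h6 h8 h9 hB hBself hBr h.1 h.2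
      exact ⟨t1, v1, fun _ => hprop⟩
    · exact ⟨1, 0, fun h' => absurd h' h⟩
  choose tf vf hprops using hex
  have hprop : ∀ up : X, P up = up → ‖up‖ = 1 →
      0 < tf up ∧ P (vf up) = 0 ∧
        (∀ (s : ℝ) (w : X), P w = 0 →
          fderiv ℝ (Jf P I) (tf up • up + vf up) (s • up + w) = 0) ∧
        (∀ (t : ℝ) (v : X), 0 ≤ t → P v = 0 → t • up + v ≠ tf up • up + vf up →
          Jf P I (t • up + v) < Jf P I (tf up • up + vf up)) :=
    fun up h h' => hprops up ⟨h, h'⟩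
  set n₁ : X → X := fun up => tf up • up + vf up with hn1
  set n₂ : X → X := fun up => n₁ (-up) with hn2
  have hnegS : ∀ up : X, P up = up → ‖up‖ = 1 → P (-up) = -up ∧ ‖-up‖ = 1 := by
    intro up h h'
    constructor
    · rw [map_neg, h]
    · rw [norm_neg, h']
  have hup0 : ∀ up : X, ‖up‖ = 1 → up ≠ 0 := by
    intro up h' h
    rw [h, norm_zero] at h'
    exact one_ne_zero h'.symm
  have hn2eq : ∀ up : X, n₂ up = (-(tf (-up))) • up + vf (-up) := by
    intro up
    show tf (-up) • (-up) + vf (-up) = (-(tf (-up))) • up + vf (-up)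
    rw [smul_neg, neg_smul]
  -- continuity of n₁ on the sphere
  have hcont1 : ContinuousOn n₁ {up : X | P up = up ∧ ‖up‖ = 1} := by
    intro up hupS
    have h0 : Tendsto n₁ (𝓝[{up : X | P up = up ∧ ‖up‖ = 1}] up) (𝓝 (n₁ up)) := by
      rw [Filter.tendsto_iff_seq_tendsto]
      intro x hx
      have hxs : ∀ᶠ k in atTop, x k ∈ {up : X | P up = up ∧ ‖up‖ = 1} :=
        hx.eventually eventually_mem_nhdsWithin
      have hxl : Tendsto x atTop (𝓝 up) := hx.mono_right nhdsWithin_le_nhds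
      set y : ℕ → X := fun k => if x k ∈ {up : X | P up = up ∧ ‖up‖ = 1} then x k else up
        with hy
      have hyS : ∀ k, P (y k) = y k ∧ ‖y k‖ = 1 := by
        intro k
        by_cases hk : x k ∈ {up : X | P up = up ∧ ‖up‖ = 1}
        · have hyk : y k = x k := if_pos hk
          rw [hyk]
          exact hk
        · have hyk : y k = up := if_neg hk
          rw [hyk]
          exact hupS
      have hyx : ∀ᶠ k in atTop, y k = x k := by
        filter_upwards [hxs] with k hk
        rw [hy]
        simp [hk]
      have hyl : Tendsto y atTop (𝓝 up) := Tendsto.congr' (hyx.mono fun k hk => hk.symm) hxl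
      have hcs := cont_seq hX h1 h2 h3 h4 h6 h8 hB tf vf
        (fun z hz hz1 => ⟨(hprop z hz hz1).1, (hprop z hz hz1).2.1, (hprop z hz hz1).2.2.2⟩)
        y up (fun k => (hyS k).1) (fun k => (hyS k).2) hyl hupS.1 hupS.2
      refine Tendsto.congr' ?_ hcs
      filter_upwards [hyx] with k hk
      show n₁ (y k) = n₁ (x k)
      rw [hk]
    exact h0
  have hmapneg : Set.MapsTo (fun z : X => -z) {up : X | P up = up ∧ ‖up‖ = 1}
      {up : X | P up = up ∧ ‖up‖ = 1} := fun z hz => hnegS z hz.1 hz.2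
  have hcont2 : ContinuousOn n₂ {up : X | P up = up ∧ ‖up‖ = 1} :=
    ContinuousOn.comp hcont1 continuous_neg.continuousOn hmapneg
  refine ⟨n₁, n₂, hcont1, hcont2, ?_, ?_⟩
  · -- pointwise statements
    intro up hup hup1
    obtain ⟨ht1, hv1, hcrit1, hstrict1⟩ := hprop up hup hup1
    obtain ⟨hupN, hup1N⟩ := hnegS up hup hup1
    obtain ⟨ht1', hv1', hcrit1', hstrict1'⟩ := hprop (-up) hupN hup1N
    have hupne : up ≠ 0 := hup0 up hup1
    refine ⟨⟨tf up, -(tf (-up)), vf up, vf (-up), ht1, by linarith, hv1, hv1',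
      rfl, hn2eq up⟩, ?_, ?_, ?_, ?_⟩
    · -- n₁ up ≠ n₂ up
      intro h
      have hP := congrArg P h
      rw [hn2eq up] at hP
      have hP1 : P (n₁ up) = tf up • up := P_decomp hup hv1 (tf up)
      have hP2 : P ((-(tf (-up))) • up + vf (-up)) = (-(tf (-up))) • up :=
        P_decomp hup hv1' _
      rw [hP1, hP2] at hP
      have h2' : (tf up - -(tf (-up))) • up = 0 := by
        rw [sub_smul, hP, sub_self]
      rcases smul_eq_zero.mp h2' with h3' | h3'
      · linarith
      · exact hupne h3'
    · -- the set of positive-energy critical points is exactly {n₁ up, n₂ up}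
      ext u
      constructor
      · rintro ⟨⟨t, v, hv, rfl⟩, hJpos, hcritu⟩
        rcases lt_trichotomy t 0 with hneg | h0 | hpos
        · right
          have hrw : t • up + v = (-t) • (-up) + v := by
            rw [smul_neg, neg_smul, neg_neg]
          have hcritu' : ∀ (s : ℝ) (w : X), P w = 0 →
              fderiv ℝ (Jf P I) ((-t) • (-up) + v) (s • (-up) + w) = 0 := by
            intro s w hw
            rw [← hrw]
            have : s • (-up) + w = (-s) • up + w := by
              rw [smul_neg, neg_smul]
            rw [this]
            exact hcritu (-s) w hw
          have huniq := unique_crit hX h1 h9 hB hBself hBr hupN hup1N ht1' hv1'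
            hstrict1' (t := -t) (v := v) (by linarith) hv hcritu'
          rw [hrw, huniq]
          rfl
        · exfalso
          rw [h0, zero_smul, zero_add] at hJpos
          have hJv : Jf P I v = -(I v) := by
            unfold Jf
            rw [hv, norm_zero]
            ring
          have := h1.2.2 v
          rw [hJv] at hJpos
          linarith
        · left
          exact unique_crit hX h1 h9 hB hBself hBr hup hup1 ht1 hv1 hstrict1
            hpos hv hcritu
      · intro hu
        rcases hu with rfl | rfl
        · refine ⟨⟨tf up, vf up, hv1, rfl⟩, ?_, hcrit1⟩
          have := J_max_ge_a h6 hup hup1 hstrict1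
          have hapos := h6.2.2
          calc (0 : ℝ) < a := hapos
          _ ≤ Jf P I (tf up • up + vf up) := this
        · refine ⟨⟨-(tf (-up)), vf (-up), hv1', hn2eq up⟩, ?_, ?_⟩
          · have := J_max_ge_a h6 hupN hup1N hstrict1'
            have hapos := h6.2.2
            show 0 < Jf P I (n₂ up)
            calc (0 : ℝ) < a := hapos
            _ ≤ Jf P I (tf (-up) • (-up) + vf (-up)) := this
          · intro s w hw
            have hsw : s • up + w = (-s) • (-up) + w := by
              rw [smul_neg, neg_smul, neg_neg]
            rw [hsw]
            exact hcrit1' (-s) w hw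
    · -- n₁ is the strict global maximum on the positive half-space
      intro t v ht hv hne
      exact hstrict1 t v ht hv hne
    · -- n₂ is the strict global maximum on the negative half-space
      intro t v ht hv hne
      have hrw : t • up + v = (-t) • (-up) + v := by
        rw [smul_neg, neg_smul, neg_neg]
      have hne' : (-t) • (-up) + v ≠ tf (-up) • (-up) + vf (-up) := by
        rw [← hrw]
        exact hne
      have := hstrict1' (-t) v (by linarith) hv hne'
      rw [← hrw] at this
      exact this
  · -- N = n₁(S X⁺)
    ext u
    constructor
    · rintro ⟨hPu0, hJu, hJvv⟩
      have hnorm_pos : 0 < ‖P u‖ := norm_pos_iff.mpr hPu0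
      set up : X := ‖P u‖⁻¹ • P u with hupdef
      have hupP : P up = up := by
        rw [hupdef, map_smul, hX.idem]
      have hup1 : ‖up‖ = 1 := by
        rw [hupdef, norm_smul, Real.norm_eq_abs, abs_of_pos (by positivity),
          inv_mul_cancel₀ (ne_of_gt hnorm_pos)]
      set v : X := u - P u with hvdef
      have hPv : P v = 0 := by
        rw [hvdef, map_sub, hX.idem, sub_self]
      have hdecomp : u = ‖P u‖ • up + v := by
        rw [hupdef, hvdef, smul_smul, mul_inv_cancel₀ (ne_of_gt hnorm_pos), one_smul]
        abel
      have e0 : fderiv ℝ (Jf P I) u (u - P u) = 0 := hJvv _ hPv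
      have e1 : fderiv ℝ (Jf P I) u (P u) = 0 := by
        have : P u = u - (u - P u) := by abel
        rw [this, map_sub, hJu, e0, sub_zero]
      have hcrit' : ∀ (s : ℝ) (w : X), P w = 0 →
          fderiv ℝ (Jf P I) (‖P u‖ • up + v) (s • up + w) = 0 := by
        intro s w hw
        rw [← hdecomp]
        have hsw : s • up + w = (s * ‖P u‖⁻¹) • P u + w := by
          rw [hupdef, smul_smul]
        rw [hsw, map_add, map_smul, e1, smul_zero, zero_add]
        exact hJvv w hw
      obtain ⟨ht1, hv1, hcrit1, hstrict1⟩ := hprop up hupP hup1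
      have huniq := unique_crit hX h1 h9 hB hBself hBr hupP hup1 ht1 hv1
        hstrict1 hnorm_pos hPv hcrit'
      refine ⟨up, ⟨hupP, hup1⟩, ?_⟩
      show tf up • up + vf up = u
      rw [← huniq]
      exact hdecomp.symm
    · rintro ⟨up, ⟨hupP, hup1⟩, rfl⟩
      obtain ⟨ht1, hv1, hcrit1, hstrict1⟩ := hprop up hupP hup1
      refine ⟨?_, ?_, ?_⟩
      · show P (n₁ up) ≠ 0
        have hP1 : P (n₁ up) = tf up • up := P_decomp hupP hv1 (tf up)
        rw [hP1]
        exact smul_ne_zero (ne_of_gt ht1) (hup0 up hup1)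
      · exact hcrit1 (tf up) (vf up) hv1
      · intro w hw
        have h' := hcrit1 0 w hw
        rwa [zero_smul, zero_add] at h'

end
end
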